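/- arXiv:2410.04489 — 9 statements merged into one kernel-verified Lean document; each statement's English description precedes it below -/
import Mathlib

section
/- (Wendel's theorem for Gaussian samples.) Let d ≥ 1 and N ≥ 1, and let x_1, …, x_N be independent random vectors in ℝ^d, each distributed according to the standard Gaussian measure N(0, I_d). Then the probability that the set {x_1, …, x_N} is linearly separable from the origin equals 2^{−(N−1)} · Σ_{k=0}^{d−1} C(N−1, k), where C(n,k) denotes the binomial coefficient. -/
open MeasureTheory ProbabilityTheory Real

/-- A finite family of points in `ℝ^d` is linearly separable from the origin iff some
vector `S` has strictly positive inner product with all of them. -/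
def SeparableFromOrigin {d N : ℕ} (x : Fin N → Fin d → ℝ) : Prop :=
  ∃ S : Fin d → ℝ, ∀ i, 0 < ∑ j, S j * x i j


open Finset
open scoped RealInnerProductSpace

noncomputable section

def sgn (b : Bool) : ℝ := if b then 1 else -1

lemma sgn_sq (b : Bool) : sgn b ^ 2 = 1 := by cases b <;> norm_num [sgn]

def W : ℕ → ℕ → ℕ
  | 0, _ => 1
  | _+1, 0 => 0
  | n+1, d+1 => W n (d+1) + W n d

lemma choose_sum_pascal (m d : ℕ) :
    ∑ k ∈ range (d+1), (m+1).choose k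
      = ∑ k ∈ range (d+1), m.choose k + ∑ k ∈ range d, m.choose k := by
  induction d with
  | zero => simp
  | succ d ih =>
      rw [sum_range_succ, ih, sum_range_succ, sum_range_succ (f := fun k => m.choose k) (n := d+1),
        sum_range_succ (f := fun k => m.choose k) (n := d), Nat.choose_succ_succ]
      ring

lemma W_closed (n d : ℕ) (hn : 1 ≤ n) :
    W n d = 2 * ∑ k ∈ range d, (n - 1).choose k := by
  induction n generalizing d with
  | zero => omega
  | succ n ih =>
      rcases Nat.eq_zero_or_pos n with rfl | hn'
      · cases d with
        | zero => simp [W]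
        | succ d =>
            show W 0 (d+1) + W 0 d = _
            have : ∀ m, ∑ k ∈ range m, Nat.choose 0 k = if m = 0 then 0 else 1 := by
              intro m; induction m with
              | zero => simp
              | succ m ihm => rw [sum_range_succ, ihm]; cases m <;> simp [Nat.choose]
            simp [W, this]
      · cases d with
        | zero => simp [W]
        | succ d =>
            show W n (d+1) + W n d = _
            rw [ih (d+1) hn', ih d hn', Nat.succ_sub_one]
            obtain ⟨m, rfl⟩ := Nat.exists_eq_add_of_le' hn'
            have h1 : m + 1 - 1 = m := rfl
            rw [h1, choose_sum_pascal m d]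
            ring

variable {V : Type} [NormedAddCommGroup V] [InnerProductSpace ℝ V]

def Region {n : ℕ} (y : Fin n → V) (ε : Fin n → Bool) : Prop :=
  ∃ S : V, ∀ i, 0 < sgn (ε i) * ⟪S, y i⟫

noncomputable def regionCount {n : ℕ} (y : Fin n → V) : ℕ :=
  Nat.card {ε : Fin n → Bool // Region y ε}

open Classical in
lemma regionCount_eq_sum {n : ℕ} (y : Fin n → V) :
    regionCount y = ∑ ε : Fin n → Bool, if Region y ε then 1 else 0 := by
  classical
  rw [regionCount, Nat.card_eq_fintype_card, Fintype.card_subtype, Finset.card_filter]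

open Classical in
theorem regionCount_generic :
    ∀ (n : ℕ) (V : Type) [NormedAddCommGroup V] [InnerProductSpace ℝ V]
      [FiniteDimensional ℝ V] (y : Fin n → V),
      (∀ s : Finset (Fin n), s.card ≤ Module.finrank ℝ V →
        LinearIndependent ℝ fun i : s => y (i : Fin n)) →
      regionCount y = W n (Module.finrank ℝ V) := by
  intro n
  induction n with
  | zero =>
      intro V _ _ _ y _
      have h : ∀ ε : Fin 0 → Bool, Region y ε := fun ε => ⟨0, fun i => i.elim0⟩
      rw [regionCount_eq_sum]
      simp [h, W]
  | succ n ih =>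
      intro V _ _ _ y hgen
      cases hd : Module.finrank ℝ V with
      | zero =>
          haveI hsub : Subsingleton V := Module.finrank_zero_iff.1 hd
          have h : ∀ ε, ¬ Region y ε := by
            rintro ε ⟨S, hS⟩
            have h0 := hS 0
            have hy : y 0 = 0 := Subsingleton.elim _ _
            rw [hy, inner_zero_right, mul_zero] at h0
            exact lt_irrefl 0 h0
          rw [regionCount_eq_sum]
          simp [h, W]
      | succ d' =>
          classical
          have h1le : 1 ≤ Module.finrank ℝ V := by omega
          have hy0 : y 0 ≠ 0 := by
            have hli := hgen {0} (by simpa using h1le)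
            exact hli.ne_zero ⟨0, by simp⟩
          set K : Submodule ℝ V := ℝ ∙ y 0 with hK
          set H : Submodule ℝ V := Kᗮ with hH
          have hrankH : Module.finrank ℝ H = d' := by
            have hfr := K.finrank_add_finrank_orthogonal
            have h1 : Module.finrank ℝ K = 1 := by
              rw [hK]; exact finrank_span_singleton hy0
            rw [← hH, h1] at hfr
            omega
          set z : Fin n → H := fun i => H.orthogonalProjectionOnto (y i.succ) with hz
          have hinner : ∀ (S : H) (i : Fin n), ⟪S, z i⟫ = ⟪(S : V), y i.succ⟫ := by
            intro S i
            have h2 : ⟪(S : V), y i.succ - (z i : V)⟫ = 0 :=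
              Submodule.inner_right_of_mem_orthogonal S.2
                (Submodule.sub_starProjection_mem_orthogonal (K := H) _)
            have h3 : ⟪(S:V), y i.succ⟫ - ⟪(S:V), (z i : V)⟫ = 0 := by
              rw [← inner_sub_right]; exact h2
            have h4 := sub_eq_zero.mp h3
            rw [Submodule.coe_inner, h4]
          have hHmem : ∀ S : V, S ∈ H ↔ ⟪S, y 0⟫ = 0 := by
            intro S
            rw [hH, hK, Submodule.mem_orthogonal_singleton_iff_inner_right, real_inner_comm]
          set U : (Fin n → Bool) → Set V :=
            fun ε => {S | ∀ i, 0 < sgn (ε i) * ⟪S, y i.succ⟫} with hUdef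
          have hUopen : ∀ ε, IsOpen (U ε) := by
            intro ε
            have hrw : U ε = ⋂ i, {S : V | 0 < sgn (ε i) * ⟪S, y i.succ⟫} := by
              ext S; simp [hUdef, Set.mem_iInter]
            rw [hrw]
            exact isOpen_iInter_of_finite fun i =>
              isOpen_lt continuous_const (continuous_const.mul (continuous_id.inner continuous_const))
          have hUconv : ∀ ε (Sm Sp : V), Sm ∈ U ε → Sp ∈ U ε →
              ∀ t ∈ Set.Icc (0:ℝ) 1, ((1-t) • Sm + t • Sp) ∈ U ε := by
            intro ε Sm Sp hSm hSp t ht i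
            have hinner2 : ⟪(1-t) • Sm + t • Sp, y i.succ⟫
                = (1-t) * ⟪Sm, y i.succ⟫ + t * ⟪Sp, y i.succ⟫ := by
              rw [inner_add_left, real_inner_smul_left, real_inner_smul_left]
            show 0 < sgn (ε i) * _
            rw [hinner2]
            have ha := hSm i; have hb := hSp i
            rcases eq_or_lt_of_le ht.1 with h0 | htpos
            · rw [← h0]; simpa using ha
            · have hb1 : 0 < t * (sgn (ε i) * ⟪Sp, y i.succ⟫) := mul_pos htpos hb
              have ha1 : 0 ≤ (1-t) * (sgn (ε i) * ⟪Sm, y i.succ⟫) :=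
                mul_nonneg (by linarith [ht.2]) ha.le
              nlinarith
          have hRegion_iff : ∀ (b : Bool) ε,
              Region y (Fin.cons b ε) ↔ ∃ S, S ∈ U ε ∧ 0 < sgn b * ⟪S, y 0⟫ := by
            intro b ε
            constructor
            · rintro ⟨S, hS⟩
              refine ⟨S, fun i => ?_, ?_⟩
              · simpa using hS i.succ
              · simpa using hS 0
            · rintro ⟨S, hS1, hS2⟩
              refine ⟨S, fun i => ?_⟩
              refine Fin.cases ?_ ?_ i
              · simpa using hS2
              · intro j; simpa using hS1 j
          have hQP : ∀ ε, Region z ε → Region (fun i => y i.succ) ε := by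
            rintro ε ⟨S, hS⟩
            exact ⟨(S : V), fun i => by rw [← hinner]; exact hS i⟩
          have hnorm : 0 < ‖y 0‖ ^ 2 := by
            have := norm_pos_iff.2 hy0
            positivity
          have hcount : ∀ ε : Fin n → Bool,
              ((if Region y (Fin.cons true ε) then 1 else 0)
                + (if Region y (Fin.cons false ε) then 1 else 0) : ℕ)
              = (if Region (fun i => y i.succ) ε then 1 else 0)
                + (if Region z ε then 1 else 0) := by
            intro ε
            by_cases hP : Region (fun i => y i.succ) ε
            · by_cases hQ : Region z ε
              · -- both signs realizable
                obtain ⟨S, hS⟩ := id hQ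
                have hSU : (S : V) ∈ U ε := fun i => by rw [← hinner]; exact hS i
                have hSy0 : ⟪(S:V), y 0⟫ = 0 := (hHmem _).1 S.2
                have hcont : Continuous fun t : ℝ => (S:V) + t • y 0 :=
                  continuous_const.add (continuous_id.smul continuous_const)
                have hopen : IsOpen ((fun t : ℝ => (S:V) + t • y 0) ⁻¹' U ε) :=
                  (hUopen ε).preimage hcont
                have h0mem : (0:ℝ) ∈ (fun t : ℝ => (S:V) + t • y 0) ⁻¹' U ε := by
                  simpa using hSU
                obtain ⟨δ, hδ, hball⟩ := Metric.isOpen_iff.1 hopen 0 h0mem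
                have hval : ∀ t : ℝ, ⟪(S:V) + t • y 0, y 0⟫ = t * ‖y 0‖ ^ 2 := by
                  intro t
                  rw [inner_add_left, real_inner_smul_left, hSy0, real_inner_self_eq_norm_sq]
                  ring
                have hmem : ∀ t : ℝ, |t| < δ → ((S:V) + t • y 0) ∈ U ε := by
                  intro t htlt
                  exact hball (by simpa [Real.dist_eq] using htlt)
                have htrue : Region y (Fin.cons true ε) := by
                  refine (hRegion_iff true ε).2 ⟨(S:V) + (δ/2) • y 0, hmem _ (by rw [abs_of_pos] <;> linarith), ?_⟩
                  rw [hval]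
                  have h5 : 0 < (δ/2) * ‖y 0‖^2 := mul_pos (by linarith) hnorm
                  simpa [sgn] using h5
                have hfalse : Region y (Fin.cons false ε) := by
                  refine (hRegion_iff false ε).2 ⟨(S:V) + (-(δ/2)) • y 0, hmem _ (by rw [abs_of_neg] <;> linarith), ?_⟩
                  rw [hval]
                  have h5 : (0:ℝ) < (δ/2) * ‖y 0‖^2 := mul_pos (by linarith) hnorm
                  simp only [sgn, if_neg Bool.false_ne_true]
                  nlinarith
                simp [hP, hQ, htrue, hfalse]
              · -- exactly one sign realizable
                obtain ⟨S, hS⟩ := id hP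
                have hSU : S ∈ U ε := fun i => hS i
                have hne : ⟪S, y 0⟫ ≠ 0 := by
                  intro h0
                  exact hQ ⟨⟨S, (hHmem S).2 h0⟩, fun i => by rw [hinner]; exact hS i⟩
                have hnotboth : ¬ (Region y (Fin.cons true ε) ∧ Region y (Fin.cons false ε)) := by
                  rintro ⟨ht, hf⟩
                  obtain ⟨Sp, hSpU, hSp0⟩ := (hRegion_iff true ε).1 ht
                  obtain ⟨Sm, hSmU, hSm0⟩ := (hRegion_iff false ε).1 hf
                  have hSp0' : 0 < ⟪Sp, y 0⟫ := by simpa [sgn] using hSp0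
                  have hSm0' : ⟪Sm, y 0⟫ < 0 := by
                    simp only [sgn, if_neg Bool.false_ne_true] at hSm0; linarith
                  set g : ℝ → ℝ := fun t => ⟪(1-t) • Sm + t • Sp, y 0⟫ with hg
                  have hgc : Continuous g := by
                    apply Continuous.inner _ continuous_const
                    exact ((continuous_const.sub continuous_id).smul continuous_const).add
                      (continuous_id.smul continuous_const)
                  have h0mem : (0:ℝ) ∈ Set.Icc (g 0) (g 1) := by
                    constructor <;> simp [hg] <;> linarith
                  obtain ⟨t, ht, hgt⟩ := intermediate_value_Icc zero_le_one hgc.continuousOn h0mem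
                  have hTH : ((1-t) • Sm + t • Sp) ∈ H := (hHmem _).2 hgt
                  have hTU := hUconv ε Sm Sp hSmU hSpU t ht
                  exact hQ ⟨⟨_, hTH⟩, fun i => by rw [hinner]; exact hTU i⟩
                rcases lt_or_gt_of_ne hne with hneg | hpos
                · have hT : Region y (Fin.cons false ε) := by
                    refine (hRegion_iff false ε).2 ⟨S, hSU, ?_⟩
                    simp only [sgn, if_neg Bool.false_ne_true]
                    linarith
                  have hF : ¬ Region y (Fin.cons true ε) := fun h => hnotboth ⟨h, hT⟩
                  simp [hP, hQ, hT, hF]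
                · have hT : Region y (Fin.cons true ε) := by
                    refine (hRegion_iff true ε).2 ⟨S, hSU, ?_⟩
                    simpa [sgn] using hpos
                  have hF : ¬ Region y (Fin.cons false ε) := fun h => hnotboth ⟨hT, h⟩
                  simp [hP, hQ, hT, hF]
            · have h1 : ¬ Region y (Fin.cons true ε) := by
                intro h
                obtain ⟨S, hS1, _⟩ := (hRegion_iff true ε).1 h
                exact hP ⟨S, fun i => hS1 i⟩
              have h2 : ¬ Region y (Fin.cons false ε) := by
                intro h
                obtain ⟨S, hS1, _⟩ := (hRegion_iff false ε).1 h
                exact hP ⟨S, fun i => hS1 i⟩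
              have hQ : ¬ Region z ε := fun h => hP (hQP ε h)
              simp [hP, hQ, h1, h2]
          -- genericity of the tail family
          have htail : ∀ s : Finset (Fin n), s.card ≤ Module.finrank ℝ V →
              LinearIndependent ℝ fun i : s => (fun i => y i.succ) (i : Fin n) := by
            intro s hs
            have hst : (s.image Fin.succ).card ≤ Module.finrank ℝ V := by
              rwa [Finset.card_image_of_injective _ (Fin.succ_injective n)]
            have h := hgen (s.image Fin.succ) hst
            exact h.comp
              (fun i : s => (⟨(i : Fin n).succ, Finset.mem_image_of_mem _ i.2⟩ :
                (s.image Fin.succ : Finset (Fin (n+1)))))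
              (fun a b hab => Subtype.ext (Fin.succ_injective n (congrArg Subtype.val hab)))
          -- genericity of the projected family
          have hz_gen : ∀ s : Finset (Fin n), s.card ≤ Module.finrank ℝ H →
              LinearIndependent ℝ fun i : s => z (i : Fin n) := by
            intro s hs
            rw [hrankH] at hs
            rw [Fintype.linearIndependent_iff]
            intro g hg
            have hw : ∀ i : Fin n, y i.succ - (z i : V) ∈ K := by
              intro i
              have h1 : y i.succ - (z i : V) ∈ Hᗮ :=
                Submodule.sub_starProjection_mem_orthogonal _
              have h2 : Hᗮ = K := by rw [hH]; exact Submodule.orthogonal_orthogonal K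
              rwa [h2] at h1
            choose r hr using fun i => Submodule.mem_span_singleton.1 (hw i)
            have hgV : ∑ i : s, g i • (z (i : Fin n) : V) = 0 := by
              have hcoe := congrArg (H.subtype) hg
              simpa using hcoe
            have hmain : (∑ i : s, g i • y (i : Fin n).succ)
                - (∑ i : s, g i * r (i : Fin n)) • y 0 = 0 := by
              rw [Finset.sum_smul, ← Finset.sum_sub_distrib, ← hgV]
              apply Finset.sum_congr rfl
              intro i _
              have hzi : (z (i : Fin n) : V) = y (i : Fin n).succ - r (i : Fin n) • y 0 := by
                rw [eq_sub_iff_add_eq, add_comm, ← eq_sub_iff_add_eq]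
                exact hr _
              rw [hzi, smul_sub, smul_smul]
            set c : Fin (n+1) → ℝ := fun j =>
              Fin.cases (-(∑ i : s, g i * r (i : Fin n)))
                (fun j' => if h : j' ∈ s then g ⟨j', h⟩ else 0) j with hc
            set t : Finset (Fin (n+1)) := insert 0 (s.image Fin.succ) with htdef
            have htcard : t.card ≤ Module.finrank ℝ V := by
              rw [hd]
              calc t.card ≤ (s.image Fin.succ).card + 1 := Finset.card_insert_le _ _
                _ = s.card + 1 := by
                    rw [Finset.card_image_of_injective _ (Fin.succ_injective n)]
                _ ≤ d' + 1 := by omega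
            have hli := hgen t htcard
            rw [Fintype.linearIndependent_iff] at hli
            have hsum0 : ∑ j : t, c (j : Fin (n+1)) • y (j : Fin (n+1)) = 0 := by
              rw [Finset.sum_coe_sort t (fun j => c j • y j)]
              rw [htdef, Finset.sum_insert (by simp [Fin.succ_ne_zero])]
              rw [Finset.sum_image (fun a _ b _ h => Fin.succ_injective n h)]
              have hrest : ∑ j ∈ s, c j.succ • y j.succ
                  = ∑ i : s, g i • y (i : Fin n).succ := by
                rw [← Finset.sum_coe_sort s (fun j => c j.succ • y j.succ)]
                apply Finset.sum_congr rfl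
                intro i _
                have hci : c (i : Fin n).succ = g i := by
                  simp only [hc, Fin.cases_succ]
                  rw [dif_pos i.2]
                rw [hci]
              rw [hrest]
              have hc0 : c 0 = -(∑ i : s, g i * r (i : Fin n)) := rfl
              rw [hc0, neg_smul, add_comm, ← sub_eq_add_neg]
              exact hmain
            intro i
            have hmem : (i : Fin n).succ ∈ t := by
              rw [htdef]
              exact Finset.mem_insert_of_mem (Finset.mem_image_of_mem _ i.2)
            have := hli (fun j => c (j : Fin (n+1))) hsum0 ⟨(i : Fin n).succ, hmem⟩
            have hci : c (i : Fin n).succ = g i := by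
              simp only [hc, Fin.cases_succ]
              rw [dif_pos i.2]
            rwa [hci] at this
          -- sum over the first coordinate
          have hsum : regionCount y = regionCount (fun i => y i.succ) + regionCount z := by
            rw [regionCount_eq_sum y, regionCount_eq_sum (fun i => y i.succ), regionCount_eq_sum z]
            rw [← Equiv.sum_comp (Fin.consEquiv (fun _ : Fin (n+1) => Bool))
              (fun ε' => if Region y ε' then 1 else 0)]
            rw [Fintype.sum_prod_type]
            rw [Fintype.sum_bool]
            rw [← Finset.sum_add_distrib]
            rw [← Finset.sum_add_distrib]
            apply Finset.sum_congr rfl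
            intro ε _
            have heq := hcount ε
            simp [Fin.consEquiv]; convert heq using 2 <;> exact if_congr Iff.rfl rfl rfl
          rw [hsum, ih V (fun i => y i.succ) htail, ih (↥H) z hz_gen, hrankH, hd]
          rfl

section Prob
open MeasureTheory ProbabilityTheory

noncomputable def gaussVec (d : ℕ) : Measure (Fin d → ℝ) :=
  Measure.pi fun _ : Fin d => gaussianReal 0 1

instance (d : ℕ) : IsProbabilityMeasure (gaussVec d) := by
  unfold gaussVec; infer_instance

lemma gaussVec_ac (d : ℕ) : gaussVec d ≪ (volume : Measure (Fin d → ℝ)) := by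
  induction d with
  | zero =>
      intro s hs
      rcases Set.eq_empty_or_nonempty s with rfl | hne
      · simp
      · exfalso
        haveI : Subsingleton (Fin 0 → ℝ) := ⟨fun a b => funext fun i => i.elim0⟩
        have hsu : s = Set.univ := by
          obtain ⟨v, hv⟩ := hne
          ext w
          simp only [Set.mem_univ, iff_true]
          rwa [Subsingleton.elim w v]
        rw [hsu] at hs
        have h1 : (volume : Measure (Fin 0 → ℝ)) Set.univ = 1 := by
          rw [volume_pi, Measure.pi_univ]
          simp
        rw [h1] at hs
        exact one_ne_zero hs
  | succ d ihd =>
      set e := MeasurableEquiv.piFinSuccAbove (fun _ : Fin (d+1) => ℝ) 0 with he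
      have hg := (measurePreserving_piFinSuccAbove (fun _ : Fin (d+1) => gaussianReal 0 1) 0).symm e
      have hv := (measurePreserving_piFinSuccAbove (fun _ : Fin (d+1) => (volume : Measure ℝ)) 0).symm e
      have h1 : gaussVec (d+1)
          = Measure.map e.symm ((gaussianReal 0 1).prod (gaussVec d)) := hg.map_eq.symm
      have h2 : (Measure.pi fun _ : Fin (d+1) => (volume : Measure ℝ))
          = Measure.map e.symm ((volume : Measure ℝ).prod (Measure.pi fun _ : Fin d => (volume : Measure ℝ))) := hv.map_eq.symm
      have hac : (gaussianReal 0 1).prod (gaussVec d)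
          ≪ (volume : Measure ℝ).prod (Measure.pi fun _ : Fin d => (volume : Measure ℝ)) := by
        refine Measure.AbsolutelyContinuous.prod
          (gaussianReal_absolutelyContinuous 0 one_ne_zero) ?_
        rw [← volume_pi]
        exact ihd
      have := hac.map (f := e.symm) e.symm.measurable
      rw [← h1, ← h2] at this
      rwa [volume_pi]
end Prob

section Null
open MeasureTheory ProbabilityTheory

variable {N d : ℕ}

noncomputable def ratComb (t : Finset (Fin N)) (q : {a // a ∈ t} → ℚ)
    (x : Fin N → Fin d → ℝ) : Fin d → ℝ :=
  ∑ j : {a // a ∈ t}, (q j : ℝ) • x (j : Fin N)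

def Bset (i : Fin N) (t : Finset (Fin N)) : Set (Fin N → Fin d → ℝ) :=
  ⋂ m : ℕ, ⋃ q : {a // a ∈ t} → ℚ,
    {x | dist (x i) (ratComb t q x) < 1/(m+1)}

lemma measurable_Bset (i : Fin N) (t : Finset (Fin N)) :
    MeasurableSet (Bset (d := d) i t) := by
  refine MeasurableSet.iInter fun m => MeasurableSet.iUnion fun q => ?_
  have hopen : IsOpen {x : Fin N → Fin d → ℝ | dist (x i) (ratComb t q x) < 1/(m+1)} := by
    apply isOpen_lt ?_ continuous_const
    apply Continuous.dist (continuous_apply i)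
    apply continuous_finset_sum
    intro j _
    exact ((continuous_apply ((j : Fin N)) : Continuous fun x : Fin N → Fin d → ℝ => x j)).const_smul (q j : ℝ)
  exact hopen.measurableSet

lemma mem_Bset_iff (i : Fin N) (t : Finset (Fin N)) (x : Fin N → Fin d → ℝ) :
    x ∈ Bset i t ↔
      x i ∈ Submodule.span ℝ (Set.range fun j : {a // a ∈ t} => x (j : Fin N)) := by
  classical
  set v : {a // a ∈ t} → (Fin d → ℝ) := fun j => x (j : Fin N) with hv
  set L := Fintype.linearCombination ℝ v with hL
  have hrange : LinearMap.range L = Submodule.span ℝ (Set.range v) :=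
    Fintype.range_linearCombination ..
  have hLc : Continuous L := LinearMap.continuous_of_finiteDimensional _
  have hclosed : IsClosed ((LinearMap.range L : Submodule ℝ (Fin d → ℝ)) : Set (Fin d → ℝ)) :=
    Submodule.closed_of_finiteDimensional _
  have hdense : Dense (Set.range fun q : {a // a ∈ t} → ℚ => (fun j => ((q j : ℝ)))) := by
    have hpi : Set.range (fun q : {a // a ∈ t} → ℚ => (fun j => ((q j : ℝ))))
        = Set.pi Set.univ (fun _ => Set.range (fun r : ℚ => (r : ℝ))) := by
      ext f
      simp only [Set.mem_range, Set.mem_pi, Set.mem_univ, forall_true_left]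
      constructor
      · rintro ⟨q, rfl⟩ j; exact ⟨q j, rfl⟩
      · intro h; choose q hq using h; exact ⟨q, funext hq⟩
    rw [hpi]
    exact dense_pi Set.univ (fun i _ => Rat.denseRange_cast)
  have hDeq : closure (Set.range fun q : {a // a ∈ t} → ℚ => L (fun j => ((q j : ℝ))))
      = ((LinearMap.range L : Submodule ℝ (Fin d → ℝ)) : Set (Fin d → ℝ)) := by
    apply Set.Subset.antisymm
    · apply closure_minimal ?_ hclosed
      rintro w ⟨q, rfl⟩
      exact LinearMap.mem_range_self L _
    · rintro w ⟨c, rfl⟩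
      have hc : c ∈ closure (Set.range fun q : {a // a ∈ t} → ℚ => (fun j => ((q j : ℝ)))) :=
        hdense c
      have h2 : L c ∈ L '' closure (Set.range fun q : {a // a ∈ t} → ℚ => (fun j => ((q j : ℝ)))) :=
        Set.mem_image_of_mem L hc
      have h3 := (image_closure_subset_closure_image hLc) h2
      rwa [← Set.range_comp] at h3
  have hmem : ∀ q : {a // a ∈ t} → ℚ, L (fun j => ((q j : ℝ))) = ratComb t q x := by
    intro q
    rw [hL, Fintype.linearCombination_apply]
    rfl
  constructor
  · intro hx
    rw [← hrange, ← SetLike.mem_coe, ← hDeq, Metric.mem_closure_iff]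
    intro ε hε
    obtain ⟨m, hm⟩ := exists_nat_one_div_lt hε
    have hx2 := Set.mem_iInter.1 hx m
    obtain ⟨q, hq⟩ := Set.mem_iUnion.1 hx2
    refine ⟨L (fun j => ((q j : ℝ))), ⟨q, rfl⟩, ?_⟩
    rw [hmem]
    calc dist (x i) (ratComb t q x) < 1/(m+1) := hq
      _ < ε := by exact_mod_cast hm
  · intro hx
    rw [← hrange, ← SetLike.mem_coe, ← hDeq, Metric.mem_closure_iff] at hx
    refine Set.mem_iInter.2 fun m => ?_
    have hpos : (0:ℝ) < 1/(m+1) := by positivity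
    obtain ⟨b, ⟨q, rfl⟩, hb⟩ := hx _ hpos
    refine Set.mem_iUnion.2 ⟨q, ?_⟩
    show dist (x i) (ratComb t q x) < 1/(m+1)
    rwa [← hmem q]
end Null

section Null2
open MeasureTheory ProbabilityTheory

lemma gaussVec_submodule_null (d : ℕ) (Wsub : Submodule ℝ (Fin d → ℝ)) (h : Wsub ≠ ⊤) :
    gaussVec d (Wsub : Set (Fin d → ℝ)) = 0 :=
  gaussVec_ac d (Measure.addHaar_submodule volume Wsub h)

lemma Bset_null {n d : ℕ} (i : Fin (n+1)) (t : Finset (Fin (n+1))) (hit : i ∉ t)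
    (htc : t.card < d) :
    Measure.pi (fun _ : Fin (n+1) => gaussVec d) (Bset i t) = 0 := by
  classical
  set μ := Measure.pi (fun _ : Fin (n+1) => gaussVec d) with hμ
  set e := MeasurableEquiv.piFinSuccAbove (fun _ : Fin (n+1) => Fin d → ℝ) i with he
  have hmp := measurePreserving_piFinSuccAbove (fun _ : Fin (n+1) => gaussVec d) i
  have hBm : MeasurableSet (Bset (d := d) i t) := measurable_Bset i t
  have hsm : MeasurableSet (e.symm ⁻¹' Bset i t) := e.symm.measurable hBm
  have h1 : μ (Bset i t)
      = ((gaussVec d).prod (Measure.pi fun _ : Fin n => gaussVec d)) (e.symm ⁻¹' Bset i t) := by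
    rw [← hmp.map_eq, MeasurableEquiv.map_apply]
    congr 1
    ext x
    change x ∈ Bset i t ↔ e.symm (e x) ∈ Bset i t
    rw [e.symm_apply_apply]
  rw [h1, Measure.prod_apply_symm hsm]
  have hzero : ∀ w : Fin n → Fin d → ℝ,
      gaussVec d ((fun v => (v, w)) ⁻¹' (e.symm ⁻¹' Bset i t)) = 0 := by
    intro w
    set Wsub : Submodule ℝ (Fin d → ℝ) := Submodule.span ℝ (Set.range fun j : {a // a ∈ t} =>
            (Fin.insertNth (α := fun _ => Fin d → ℝ) i 0 w) (j : Fin (n+1))) with hWsub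
    have hsec : ((fun v => (v, w)) ⁻¹' (e.symm ⁻¹' Bset i t)) = (Wsub : Set (Fin d → ℝ)) := by
      ext v
      have hes : e.symm (v, w) = i.insertNth v w := rfl
      simp only [Set.mem_preimage, hes, SetLike.mem_coe]
      rw [mem_Bset_iff]
      have hsame : (Fin.insertNth (α := fun _ => Fin d → ℝ) i v w) i = v := by simp
      have hfam : (fun j : {a // a ∈ t} => (Fin.insertNth (α := fun _ => Fin d → ℝ) i v w) (j : Fin (n+1)))
          = (fun j : {a // a ∈ t} => (Fin.insertNth (α := fun _ => Fin d → ℝ) i 0 w) (j : Fin (n+1))) := by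
        funext j
        have hne : (j : Fin (n+1)) ≠ i := fun hh => hit (hh ▸ j.2)
        obtain ⟨k, hk⟩ := Fin.exists_succAbove_eq hne
        rw [← hk, Fin.insertNth_apply_succAbove, Fin.insertNth_apply_succAbove]
      rw [hsame, hfam, hWsub]
    rw [hsec]
    apply gaussVec_submodule_null
    intro htop
    have hle2 : Module.finrank ℝ Wsub ≤ t.card := by
      have hle := finrank_range_le_card (R := ℝ)
        (fun j : {a // a ∈ t} => (Fin.insertNth (α := fun _ => Fin d → ℝ) i 0 w) (j : Fin (n+1)))
      rw [Fintype.card_coe] at hle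
      exact hle
    rw [htop, finrank_top] at hle2
    have hfd : Module.finrank ℝ (Fin d → ℝ) = d := by
      simp [Module.finrank_pi]
    omega
  have : ∀ᵐ w ∂(Measure.pi fun _ : Fin n => gaussVec d),
      gaussVec d ((fun v => (v, w)) ⁻¹' (e.symm ⁻¹' Bset i t)) = 0 :=
    Filter.Eventually.of_forall hzero
  rw [lintegral_congr_ae this, lintegral_zero]

lemma gen_null (n d : ℕ) :
    Measure.pi (fun _ : Fin (n+1) => gaussVec d)
      {x : Fin (n+1) → Fin d → ℝ | ¬ ∀ s : Finset (Fin (n+1)), s.card ≤ d →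
        LinearIndependent ℝ fun i : s => x (i : Fin (n+1))} = 0 := by
  classical
  set bigU : Set (Fin (n+1) → Fin d → ℝ) := ⋃ (i : Fin (n+1)), ⋃ (t : Finset (Fin (n+1))),
    ⋃ (_ : i ∉ t ∧ t.card < d), Bset i t with hbigU
  have hsub : {x : Fin (n+1) → Fin d → ℝ | ¬ ∀ s : Finset (Fin (n+1)), s.card ≤ d →
      LinearIndependent ℝ fun i : s => x (i : Fin (n+1))} ⊆ bigU := by
    intro x hx
    simp only [Set.mem_setOf_eq] at hx
    push_neg at hx
    obtain ⟨s, hcard, hdep⟩ := hx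
    rw [linearIndependent_iff_notMem_span] at hdep
    push_neg at hdep
    obtain ⟨i, hi⟩ := hdep
    have hd1 : 1 ≤ d := by
      have h1 : 1 ≤ s.card := Finset.card_pos.2 ⟨(i : Fin (n+1)), i.2⟩
      omega
    set t : Finset (Fin (n+1)) := s.erase (i : Fin (n+1)) with ht
    have htc : t.card < d := by
      rw [ht, Finset.card_erase_of_mem i.2]
      have h1 : 1 ≤ s.card := Finset.card_pos.2 ⟨(i : Fin (n+1)), i.2⟩
      omega
    have hit : (i : Fin (n+1)) ∉ t := Finset.notMem_erase _ _
    rw [hbigU]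
    refine Set.mem_iUnion.2 ⟨(i : Fin (n+1)), Set.mem_iUnion.2 ⟨t, Set.mem_iUnion.2
      ⟨⟨hit, htc⟩, ?_⟩⟩⟩
    rw [mem_Bset_iff]
    refine Submodule.span_mono ?_ hi
    rintro w ⟨j, ⟨-, hji⟩, rfl⟩
    have hji' : (j : Fin (n+1)) ≠ (i : Fin (n+1)) := by
      intro hh
      exact hji (by simpa using Subtype.ext hh)
    exact ⟨⟨(j : Fin (n+1)), Finset.mem_erase.2 ⟨hji', j.2⟩⟩, rfl⟩
  have hnull : Measure.pi (fun _ : Fin (n+1) => gaussVec d) bigU = 0 := by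
    refine measure_iUnion_null fun i => measure_iUnion_null fun t => ?_
    by_cases h : i ∉ t ∧ t.card < d
    · exact measure_mono_null (Set.iUnion_subset fun _ => subset_rfl)
        (Bset_null i t h.1 h.2)
    · have hempty : (⋃ (_ : i ∉ t ∧ t.card < d), Bset (d := d) i t) = (∅ : Set _) := by
        simp [h]
      rw [hempty]
      simp
  exact measure_mono_null hsub hnull
end Null2

section Main
open MeasureTheory ProbabilityTheory
open scoped ENNReal

lemma mul_sum_swap {d : ℕ} (c : ℝ) (S v : Fin d → ℝ) :
    ∑ j, S j * (c * v j) = c * ∑ j, S j * v j := by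
  rw [Finset.mul_sum]
  exact Finset.sum_congr rfl fun j _ => by ring

theorem wendel_gaussian'
    (d n : ℕ) (hd : 1 ≤ d) :
    ((Measure.pi fun _ : Fin (n+1) => (Measure.pi fun _ : Fin d => gaussianReal 0 1))
        {x : Fin (n+1) → Fin d → ℝ | SeparableFromOrigin x}).toReal
      =
    (2 ^ n : ℝ)⁻¹ * ∑ k ∈ Finset.range d, (n.choose k : ℝ) := by
  classical
  set μ : Measure (Fin (n+1) → Fin d → ℝ) := Measure.pi (fun _ : Fin (n+1) => gaussVec d)
    with hμ
  have hμeq : (Measure.pi fun _ : Fin (n+1) => (Measure.pi fun _ : Fin d => gaussianReal 0 1))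
      = μ := rfl
  rw [hμeq]
  set Sep : Set (Fin (n+1) → Fin d → ℝ) := {x | SeparableFromOrigin x} with hSep
  have hSepOpen : IsOpen Sep := by
    have hrw : Sep = ⋃ S : Fin d → ℝ, ⋂ i, {x : Fin (n+1) → Fin d → ℝ | 0 < ∑ j, S j * x i j} := by
      ext x
      simp [hSep, SeparableFromOrigin, Set.mem_iInter]
    rw [hrw]
    refine isOpen_iUnion fun S => isOpen_iInter_of_finite fun i => ?_
    refine isOpen_lt continuous_const ?_
    exact continuous_finset_sum _ fun j _ =>
      continuous_const.mul ((continuous_apply j).comp (continuous_apply i))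
  have hSepM : MeasurableSet Sep := hSepOpen.measurableSet
  set T : (Fin (n+1) → Bool) → (Fin (n+1) → Fin d → ℝ) → (Fin (n+1) → Fin d → ℝ) :=
    fun ε x i j => sgn (ε i) * x i j with hT
  have hTmp : ∀ ε, MeasurePreserving (T ε) μ μ := by
    intro ε
    rw [hμ, hT]
    unfold gaussVec
    refine measurePreserving_pi _ _ (f := fun (i : Fin (n+1)) (v : Fin d → ℝ) (j : Fin d) => sgn (ε i) * v j) (fun i => ?_)
    refine measurePreserving_pi _ _ (f := fun (_ : Fin d) (r : ℝ) => sgn (ε i) * r) (fun j => ?_)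
    refine ⟨measurable_id.const_mul _, ?_⟩
    have hmap := gaussianReal_map_const_mul (μ := 0) (v := 1) (sgn (ε i))
    rw [mul_zero] at hmap
    have hv : (⟨sgn (ε i)^2, sq_nonneg _⟩ : NNReal) * 1 = 1 := by
      ext
      simp [sgn_sq]
    convert hmap using 2
    ext; simp [sgn_sq]
  have hμA : ∀ ε, μ (T ε ⁻¹' Sep) = μ Sep :=
    fun ε => (hTmp ε).measure_preimage hSepM.nullMeasurableSet
  -- transfer to EuclideanSpace
  set E := EuclideanSpace ℝ (Fin d) with hE
  have hfr : Module.finrank ℝ E = d := finrank_euclideanSpace_fin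
  set toE : (Fin d → ℝ) ≃ₗ[ℝ] E := (WithLp.linearEquiv 2 ℝ (Fin d → ℝ)).symm with htoE
  have hinnerE : ∀ (S : E) (v : Fin d → ℝ), ⟪S, toE v⟫ = ∑ j, S j * v j := by
    intro S v
    rw [PiLp.inner_apply]
    refine Finset.sum_congr rfl fun j _ => ?_
    rw [RCLike.inner_apply, starRingEnd_apply, star_trivial, htoE,
      WithLp.linearEquiv_symm_apply, PiLp.toLp_apply]
    exact mul_comm _ _
  have hmemA : ∀ (ε : Fin (n+1) → Bool) (x : Fin (n+1) → Fin d → ℝ),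
      x ∈ T ε ⁻¹' Sep ↔ Region (fun i => toE (x i)) ε := by
    intro ε x
    simp only [Set.mem_preimage, hSep, Set.mem_setOf_eq, SeparableFromOrigin, hT]
    constructor
    · rintro ⟨S, hS⟩
      refine ⟨toE S, fun i => ?_⟩
      have h1 := hS i
      rw [hinnerE]
      have h2 : ∑ j, (toE S) j * x i j = ∑ j, S j * x i j := rfl
      rw [h2, ← mul_sum_swap]
      exact h1
    · rintro ⟨S, hS⟩
      refine ⟨(WithLp.linearEquiv 2 ℝ (Fin d → ℝ)) S, fun i => ?_⟩
      have h1 := hS i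
      rw [hinnerE] at h1
      have h2 : ∑ j, ((WithLp.linearEquiv 2 ℝ (Fin d → ℝ)) S) j * (sgn (ε i) * x i j)
          = ∑ j, S j * (sgn (ε i) * x i j) := rfl
      rw [h2, mul_sum_swap]
      exact h1
  have hgen_transfer : ∀ x : Fin (n+1) → Fin d → ℝ,
      (∀ s : Finset (Fin (n+1)), s.card ≤ d →
        LinearIndependent ℝ fun i : s => x (i : Fin (n+1))) →
      ∀ s : Finset (Fin (n+1)), s.card ≤ Module.finrank ℝ E →
        LinearIndependent ℝ fun i : s => toE (x (i : Fin (n+1))) := by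
    intro x hx s hs
    rw [hfr] at hs
    exact (hx s hs).map' toE.toLinearMap toE.ker
  have hcount : ∀ x : Fin (n+1) → Fin d → ℝ,
      (∀ s : Finset (Fin (n+1)), s.card ≤ d →
        LinearIndependent ℝ fun i : s => x (i : Fin (n+1))) →
      ∑ ε : Fin (n+1) → Bool, Set.indicator (T ε ⁻¹' Sep) (1 : (Fin (n+1) → Fin d → ℝ) → ℝ≥0∞) x
        = (W (n+1) d : ℝ≥0∞) := by
    intro x hx
    have h1 : ∀ ε : Fin (n+1) → Bool, Set.indicator (T ε ⁻¹' Sep) (1 : (Fin (n+1) → Fin d → ℝ) → ℝ≥0∞) x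
        = if Region (fun i => toE (x i)) ε then 1 else 0 := by
      intro ε
      rw [Set.indicator_apply]
      rw [if_congr (hmemA ε x) rfl rfl]
      simp
    have h2 : ∑ ε : Fin (n+1) → Bool, Set.indicator (T ε ⁻¹' Sep) (1 : (Fin (n+1) → Fin d → ℝ) → ℝ≥0∞) x
        = ((∑ ε : Fin (n+1) → Bool, if Region (fun i => toE (x i)) ε then 1 else 0 : ℕ) : ℝ≥0∞) := by
      rw [Nat.cast_sum]
      refine Finset.sum_congr rfl fun ε _ => ?_
      rw [h1 ε]
      split <;> simp
    rw [h2, ← regionCount_eq_sum]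
    rw [regionCount_generic (n+1) E (fun i => toE (x i)) (hgen_transfer x hx), hfr]
  have hGae : ∀ᵐ x ∂μ, ∀ s : Finset (Fin (n+1)), s.card ≤ d →
      LinearIndependent ℝ fun i : s => x (i : Fin (n+1)) := by
    rw [MeasureTheory.ae_iff]
    exact gen_null n d
  have hmeas : ∀ ε, MeasurableSet (T ε ⁻¹' Sep) := fun ε => (hTmp ε).measurable hSepM
  have hkey : ∑ ε : Fin (n+1) → Bool, μ (T ε ⁻¹' Sep) = (W (n+1) d : ℝ≥0∞) := by
    calc ∑ ε : Fin (n+1) → Bool, μ (T ε ⁻¹' Sep)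
        = ∑ ε : Fin (n+1) → Bool, ∫⁻ x, Set.indicator (T ε ⁻¹' Sep) 1 x ∂μ :=
          Finset.sum_congr rfl fun ε _ => (lintegral_indicator_one (hmeas ε)).symm
      _ = ∫⁻ x, ∑ ε : Fin (n+1) → Bool, Set.indicator (T ε ⁻¹' Sep) 1 x ∂μ :=
          (lintegral_finset_sum _ fun ε _ => measurable_one.indicator (hmeas ε)).symm
      _ = ∫⁻ x, (W (n+1) d : ℝ≥0∞) ∂μ :=
          lintegral_congr_ae (hGae.mono fun x hx => hcount x hx)
      _ = (W (n+1) d : ℝ≥0∞) := by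
          rw [lintegral_const, measure_univ, mul_one]
  have hconst : ∑ ε : Fin (n+1) → Bool, μ (T ε ⁻¹' Sep) = 2^(n+1) * μ Sep := by
    rw [Finset.sum_congr rfl fun ε _ => hμA ε, Finset.sum_const, Finset.card_univ]
    rw [Fintype.card_fun]
    simp [nsmul_eq_mul, mul_comm]
  rw [hconst] at hkey
  have h2ne : ((2:ℝ≥0∞)^(n+1)) ≠ 0 := by positivity
  have h2top : ((2:ℝ≥0∞)^(n+1)) ≠ ⊤ := by
    exact ENNReal.pow_ne_top (by norm_num)
  have hfinal : μ Sep = (W (n+1) d : ℝ≥0∞) / 2^(n+1) :=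
    (ENNReal.eq_div_iff h2ne h2top).2 hkey
  rw [hfinal, ENNReal.toReal_div]
  rw [ENNReal.toReal_natCast]
  have h3 : ((2:ℝ≥0∞)^(n+1)).toReal = 2^(n+1) := by
    rw [ENNReal.toReal_pow]
    norm_num
  rw [h3]
  have h4 : (W (n+1) d : ℝ) = 2 * ∑ k ∈ Finset.range d, (n.choose k : ℝ) := by
    rw [W_closed (n+1) d (by omega), Nat.succ_sub_one]
    push_cast
    ring
  rw [h4, pow_succ]
  have h5 : (0:ℝ) < 2^n := by positivity
  field_simp

/-- **Wendel's theorem for Gaussian samples.** For `N` i.i.d. standard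
Gaussian vectors in `ℝ^d`, the probability of linear separability from the origin is
`2^{−(N−1)} Σ_{k=0}^{d−1} C(N−1, k)`. -/
theorem wendel_gaussian
    (d N : ℕ) (hd : 1 ≤ d) (hN : 1 ≤ N) :
    ((Measure.pi fun _ : Fin N => (Measure.pi fun _ : Fin d => gaussianReal 0 1))
        {x : Fin N → Fin d → ℝ | SeparableFromOrigin x}).toReal
      =
    (2 ^ (N - 1) : ℝ)⁻¹ * ∑ k ∈ Finset.range d, ((N - 1).choose k : ℝ) := by
  obtain ⟨n, rfl⟩ : ∃ n, N = n + 1 := ⟨N - 1, by omega⟩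
  rw [Nat.succ_sub_one]
  exact wendel_gaussian' d n hd
end Main
end
end

section
/- (Separable case of the extended hard-margin SVM problem.) Let x_1, …, x_N ∈ ℝ^d and suppose S* ∈ ℝ^d is a minimizer of ‖S‖² over the nonempty set {S ∈ ℝ^d : ⟨S, x_i⟩ ≤ −1 for all i}, and set M = 1/‖S*‖ (the margin). Then the pair (S_opt, b_opt) = ((M²/(1+M²)) S*, −1/(1+M²)) is the unique minimizer of ‖S‖² + b² over {(S,b) ∈ ℝ^d × ℝ : ⟨S, x_i⟩ + b ≤ −1 for all i}; in particular the minimizer satisfies b_opt/‖S_opt‖ = −1/M. -/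
open RealInnerProductSpace

set_option maxHeartbeats 1000000 in
/-- **separable case of the extended hard-margin SVM problem.**
If `S*` minimizes `‖S‖²` over `{S : ⟨S, x_i⟩ ≤ −1 ∀ i}` and `M = 1/‖S*‖` is the margin,
then `((M²/(1+M²))·S*, −1/(1+M²))` is the unique minimizer of `‖S‖² + b²` over
`{(S,b) : ⟨S, x_i⟩ + b ≤ −1 ∀ i}`, and this minimizer satisfies `b/‖S‖ = −1/M`. -/
theorem extended_svm_separable
    (d N : ℕ) (hN : 1 ≤ N) (x : Fin N → EuclideanSpace ℝ (Fin d))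
    (Sstar : EuclideanSpace ℝ (Fin d))
    (hfeas : ∀ i, ⟪Sstar, x i⟫ ≤ -1)
    (hmin : ∀ S : EuclideanSpace ℝ (Fin d), (∀ i, ⟪S, x i⟫ ≤ -1) → ‖Sstar‖ ^ 2 ≤ ‖S‖ ^ 2)
    (M : ℝ) (hM : M = 1 / ‖Sstar‖) :
    (∀ i, ⟪(M ^ 2 / (1 + M ^ 2)) • Sstar, x i⟫ + (-1 / (1 + M ^ 2)) ≤ -1) ∧
    (∀ S : EuclideanSpace ℝ (Fin d), ∀ b : ℝ, (∀ i, ⟪S, x i⟫ + b ≤ -1) →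
      ‖(M ^ 2 / (1 + M ^ 2)) • Sstar‖ ^ 2 + (-1 / (1 + M ^ 2)) ^ 2 ≤ ‖S‖ ^ 2 + b ^ 2 ∧
      (‖S‖ ^ 2 + b ^ 2 = ‖(M ^ 2 / (1 + M ^ 2)) • Sstar‖ ^ 2 + (-1 / (1 + M ^ 2)) ^ 2 →
        S = (M ^ 2 / (1 + M ^ 2)) • Sstar ∧ b = -1 / (1 + M ^ 2))) ∧
    (-1 / (1 + M ^ 2)) / ‖(M ^ 2 / (1 + M ^ 2)) • Sstar‖ = -1 / M := by
  have hSne : Sstar ≠ 0 := by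
    intro h
    have := hfeas ⟨0, hN⟩
    rw [h, inner_zero_left] at this
    linarith
  have hn : 0 < ‖Sstar‖ := norm_pos_iff.mpr hSne
  set n : ℝ := ‖Sstar‖ with hn_def
  have hd : (0:ℝ) < n ^ 2 + 1 := by positivity
  have hM2 : M ^ 2 = 1 / n ^ 2 := by rw [hM]; field_simp
  have h1M : 1 + M ^ 2 = (n ^ 2 + 1) / n ^ 2 := by rw [hM2]; field_simp
  have ht : M ^ 2 / (1 + M ^ 2) = 1 / (n ^ 2 + 1) := by
    rw [h1M, hM2]
    rw [div_div_eq_mul_div, div_mul_eq_mul_div, one_mul, div_div]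
    rw [div_mul_eq_div_div, div_self (by positivity : (n:ℝ) ^ 2 ≠ 0)]
  have hb : -1 / (1 + M ^ 2) = -(n ^ 2) / (n ^ 2 + 1) := by
    rw [h1M]
    field_simp
  rw [ht, hb]
  -- norm of optimal S
  have hnorm_opt : ‖((1:ℝ) / (n ^ 2 + 1)) • Sstar‖ = n / (n ^ 2 + 1) := by
    rw [norm_smul, Real.norm_eq_abs, abs_of_pos (by positivity)]
    field_simp
    exact hn_def.symm
  have hnorm_opt2 : ‖((1:ℝ) / (n ^ 2 + 1)) • Sstar‖ ^ 2 = n ^ 2 / (n ^ 2 + 1) ^ 2 := by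
    rw [hnorm_opt]; field_simp
  -- uniqueness of the original minimizer
  have huniq : ∀ S' : EuclideanSpace ℝ (Fin d), (∀ i, ⟪S', x i⟫ ≤ -1) →
      ‖S'‖ ^ 2 = n ^ 2 → S' = Sstar := by
    intro S' hf he
    have hmid : ∀ i, ⟪(1/2 : ℝ) • (S' + Sstar), x i⟫ ≤ -1 := by
      intro i
      rw [real_inner_smul_left, inner_add_left]
      have h1 := hf i; have h2 := hfeas i
      linarith
    have h1 := hmin _ hmid
    have h2 : ‖(1/2 : ℝ) • (S' + Sstar)‖ ^ 2 = (1/4) * ‖S' + Sstar‖ ^ 2 := by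
      rw [norm_smul, Real.norm_eq_abs, mul_pow]
      norm_num
    have h3 : ‖S' + Sstar‖ ^ 2 = ‖S'‖ ^ 2 + 2 * ⟪S', Sstar⟫ + ‖Sstar‖ ^ 2 :=
      norm_add_sq_real _ _
    have h4 : ‖S' - Sstar‖ ^ 2 = ‖S'‖ ^ 2 - 2 * ⟪S', Sstar⟫ + ‖Sstar‖ ^ 2 :=
      norm_sub_sq_real _ _
    have h5 : ‖S' - Sstar‖ ^ 2 ≤ 0 := by
      rw [h2, h3] at h1
      nlinarith
    have h6 : ‖S' - Sstar‖ = 0 := by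
      have := sq_nonneg ‖S' - Sstar‖
      have : ‖S' - Sstar‖ ^ 2 = 0 := le_antisymm h5 this
      exact pow_eq_zero_iff (by norm_num) |>.mp this
    have := norm_eq_zero.mp h6
    exact sub_eq_zero.mp this
  refine ⟨?_, ?_, ?_⟩
  · intro i
    rw [real_inner_smul_left]
    have h1 := hfeas i
    have h2 : (1 / (n ^ 2 + 1)) * ⟪Sstar, x i⟫ ≤ (1 / (n ^ 2 + 1)) * (-1) :=
      mul_le_mul_of_nonneg_left h1 (by positivity)
    have h3 : (1 / (n ^ 2 + 1)) * (-1) + (-(n ^ 2) / (n ^ 2 + 1)) = -1 := by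
      field_simp
      ring
    linarith
  · intro S b hfSb
    rw [hnorm_opt2]
    have hV : n ^ 2 / (n ^ 2 + 1) ^ 2 + (-(n ^ 2) / (n ^ 2 + 1)) ^ 2 = n ^ 2 / (n ^ 2 + 1) := by
      field_simp; ring
    rw [hV]
    by_cases hbcase : b ≤ -1
    · constructor
      · have : n ^ 2 / (n ^ 2 + 1) < 1 := by
          rw [div_lt_one hd]; linarith
        nlinarith
      · intro heq
        have : n ^ 2 / (n ^ 2 + 1) < 1 := by
          rw [div_lt_one hd]; linarith
        nlinarith [sq_nonneg ‖S‖]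
    · push_neg at hbcase
      have h1b : (0:ℝ) < 1 + b := by linarith
      have hfS' : ∀ i, ⟪(1 / (1 + b)) • S, x i⟫ ≤ -1 := by
        intro i
        rw [real_inner_smul_left]
        have h1 : ⟪S, x i⟫ ≤ -1 - b := by have := hfSb i; linarith
        have h2 : (1 / (1 + b)) * ⟪S, x i⟫ ≤ (1 / (1 + b)) * (-1 - b) :=
          mul_le_mul_of_nonneg_left h1 (by positivity)
        have h3 : (1 / (1 + b)) * (-1 - b) = -1 := by field_simp; ring
        linarith
      have hkey := hmin _ hfS'
      have hns : ‖(1 / (1 + b)) • S‖ ^ 2 = ‖S‖ ^ 2 / (1 + b) ^ 2 := by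
        rw [norm_smul, Real.norm_eq_abs, abs_of_pos (by positivity), mul_pow]
        field_simp
      rw [hns] at hkey
      have hkey2 : n ^ 2 * (1 + b) ^ 2 ≤ ‖S‖ ^ 2 := by
        rw [le_div_iff₀ (by positivity)] at hkey
        linarith
      have hquad : n ^ 2 * (1 + b) ^ 2 + b ^ 2 - n ^ 2 / (n ^ 2 + 1)
          = (n ^ 2 + 1) * (b + n ^ 2 / (n ^ 2 + 1)) ^ 2 := by
        field_simp; ring
      constructor
      · linarith [hkey2, hquad, mul_nonneg hd.le (sq_nonneg (b + n ^ 2 / (n ^ 2 + 1)))]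
      · intro heq
        have h7 : (n ^ 2 + 1) * (b + n ^ 2 / (n ^ 2 + 1)) ^ 2 ≤ 0 := by linarith
        have h8 : (n ^ 2 + 1) * (b + n ^ 2 / (n ^ 2 + 1)) ^ 2 = 0 :=
          le_antisymm h7 (mul_nonneg hd.le (sq_nonneg _))
        have h9 : (b + n ^ 2 / (n ^ 2 + 1)) ^ 2 = 0 :=
          (mul_eq_zero.mp h8).resolve_left hd.ne'
        have hbz' : b + n ^ 2 / (n ^ 2 + 1) = 0 :=
          pow_eq_zero_iff two_ne_zero |>.mp h9
        have hneg : -(n ^ 2) / (n ^ 2 + 1) = -(n ^ 2 / (n ^ 2 + 1)) := by ring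
        have hbval : b = -(n ^ 2) / (n ^ 2 + 1) := by rw [hneg]; linarith
        refine ⟨?_, hbval⟩
        have h1bval : 1 + b = 1 / (n ^ 2 + 1) := by rw [hbval]; field_simp; ring
        have hSval : ‖S‖ ^ 2 = n ^ 2 / (n ^ 2 + 1) ^ 2 := by
          rw [hbval] at heq
          have harith : n ^ 2 / (n ^ 2 + 1) - (-(n ^ 2) / (n ^ 2 + 1)) ^ 2
              = n ^ 2 / (n ^ 2 + 1) ^ 2 := by
            field_simp
            ring
          linarith
        have hS'norm : ‖(1 / (1 + b)) • S‖ ^ 2 = n ^ 2 := by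
          rw [hns, hSval, h1bval]
          field_simp
        have := huniq _ hfS' hS'norm
        have hSeq : (1 / (1 + b)) • S = Sstar := this
        rw [h1bval] at hSeq
        rw [← hSeq, smul_smul]
        have hone : (1 / (n ^ 2 + 1)) * (1 / (1 / (n ^ 2 + 1))) = 1 := by
          field_simp
        rw [hone, one_smul]
  · rw [hnorm_opt]
    rw [hM]
    field_simp
end

section
/- Let x_1, …, x_N ∈ ℝ^d be such that for every nonzero S ∈ ℝ^d there exists an index i with ⟨S, x_i⟩ > 0 (i.e. the data is not linearly separable from the origin even in the weak sense). Then the function f(S) = Σ_{i=1}^N exp(⟨S, x_i⟩) is coercive — f(S) → ∞ as ‖S‖ → ∞ — and f attains a global minimum at some finite point S_∞ ∈ ℝ^d. -/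
/-!
By compactness of the unit sphere, the hypothesis holds with a uniform margin: there is `ε > 0`
such that every `S` has some `⟪S, x i⟫ ≥ ε ‖S‖`. Hence `f S ≥ exp (ε ‖S‖)`, so `f` is coercive,
and a continuous coercive function on a finite-dimensional space attains its minimum.
-/

open RealInnerProductSpace Filter Bornology

section

variable {E ι : Type*} [NormedAddCommGroup E] [InnerProductSpace ℝ E] [Fintype ι]

theorem exists_pos_mul_norm_le_inner [FiniteDimensional ℝ E] (x : ι → E)
    (h : ∀ S ≠ 0, ∃ i, 0 < ⟪S, x i⟫) :
    ∃ ε > 0, ∀ S ≠ 0, ∃ i, ε * ‖S‖ ≤ ⟪S, x i⟫ := by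
  rcases isEmpty_or_nonempty ι with _ | _
  · exact ⟨1, one_pos, fun S hS => (h S hS).elim fun i _ => isEmptyElim i⟩
  let g : E → ℝ := fun u => Finset.univ.sup' Finset.univ_nonempty fun i => ⟪u, x i⟫
  have hg : Continuous g :=
    Continuous.finset_sup'_apply _ fun i _ => continuous_id.inner continuous_const
  have hg_pos : ∀ u ∈ Metric.sphere (0 : E) 1, 0 < g u := fun u hu => by
    obtain ⟨i, hi⟩ := h u (ne_zero_of_mem_unit_sphere ⟨u, hu⟩)
    exact hi.trans_le (Finset.le_sup' (fun j => ⟪u, x j⟫) (Finset.mem_univ i))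
  obtain ⟨ε, hε, hεg⟩ := (isCompact_sphere (0 : E) 1).exists_forall_le' hg.continuousOn hg_pos
  refine ⟨ε, hε, fun S hS => ?_⟩
  have hS' : 0 < ‖S‖ := norm_pos_iff.2 hS
  obtain ⟨i, -, hi⟩ :=
    Finset.exists_mem_eq_sup' Finset.univ_nonempty fun i => ⟪‖S‖⁻¹ • S, x i⟫
  have hεi : ε ≤ ⟪‖S‖⁻¹ • S, x i⟫ := hi ▸ hεg (‖S‖⁻¹ • S) (by simp [norm_smul, hS'.ne'])
  rw [real_inner_smul_left, le_inv_mul_iff₀ hS', mul_comm] at hεi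
  exact ⟨i, hεi⟩

theorem tendsto_sum_exp_inner_cobounded [FiniteDimensional ℝ E] (x : ι → E)
    (h : ∀ S ≠ 0, ∃ i, 0 < ⟪S, x i⟫) :
    Tendsto (fun S => ∑ i, Real.exp ⟪S, x i⟫) (cobounded E) atTop := by
  obtain ⟨ε, hε, hεx⟩ := exists_pos_mul_norm_le_inner x h
  have hexp : Tendsto (fun S : E => Real.exp (ε * ‖S‖)) (cobounded E) atTop :=
    Real.tendsto_exp_atTop.comp (tendsto_norm_cobounded_atTop.const_mul_atTop hε)
  refine tendsto_atTop_mono' _ ?_ hexp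
  filter_upwards [tendsto_norm_cobounded_atTop.eventually_gt_atTop 0] with S hS
  obtain ⟨i, hi⟩ := hεx S (norm_pos_iff.1 hS)
  calc Real.exp (ε * ‖S‖) ≤ Real.exp ⟪S, x i⟫ := Real.exp_le_exp.2 hi
    _ ≤ ∑ j, Real.exp ⟪S, x j⟫ :=
      Finset.single_le_sum (f := fun j => Real.exp ⟪S, x j⟫) (fun j _ => (Real.exp_pos _).le) (Finset.mem_univ i)

end

/-- If for every nonzero direction `S` some data point has strictly
positive projection (`⟨S, x_i⟩ > 0`), then the bias-free exponential loss
`f(S) = Σ_i exp(⟨S, x_i⟩)` is coercive (`f(S) → ∞` as `‖S‖ → ∞`) and attains a global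
minimum at some finite point `S_∞`. -/
theorem exponential_loss_coercive_and_attains_min
    (d N : ℕ) (x : Fin N → EuclideanSpace ℝ (Fin d))
    (hinsep : ∀ S : EuclideanSpace ℝ (Fin d), S ≠ 0 → ∃ i, 0 < ⟪S, x i⟫) :
    Tendsto (fun S : EuclideanSpace ℝ (Fin d) => ∑ i, Real.exp ⟪S, x i⟫)
      (Filter.comap (fun S : EuclideanSpace ℝ (Fin d) => ‖S‖) atTop) atTop ∧
    ∃ Sinf : EuclideanSpace ℝ (Fin d),
      ∀ S : EuclideanSpace ℝ (Fin d),
        (∑ i, Real.exp ⟪Sinf, x i⟫) ≤ ∑ i, Real.exp ⟪S, x i⟫ := by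
  have hcoercive := tendsto_sum_exp_inner_cobounded x hinsep
  have hcont : Continuous fun S : EuclideanSpace ℝ (Fin d) => ∑ i, Real.exp ⟪S, x i⟫ := by
    fun_prop
  exact ⟨by rwa [comap_norm_atTop],
    hcont.exists_forall_le (Metric.cobounded_eq_cocompact (α := EuclideanSpace ℝ (Fin d)) ▸ hcoercive)⟩
end

section
/- (Lower bound on the minimizer norm for almost-separable data.) Let x_1, …, x_N ∈ ℝ^d with N > d, let D = max_{i,j} ‖x_i − x_j‖ > 0, let 0 < ε < 1, and suppose the origin is ε-close to the boundary of the convex hull of the data with respect to a subset {x_1, …, x_k} of size k ≥ 1: for every choice of weights q_1, …, q_N ≥ 0 with Σ_i q_i = 1 and Σ_i q_i x_i = 0, one has Σ_{i=1}^k q_i ≥ 1 − ε. If S ∈ ℝ^d is a global minimizer of f(S) = Σ_{i=1}^N exp(⟨S, x_i⟩), then ‖S‖ ≥ (1/D) · log( ((1−ε)/ε) · ((N−k)/k) ). -/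
open RealInnerProductSpace

/-- **lower bound on the minimizer norm for almost-separable data.**
If the origin is `ε`-close to the boundary of the convex hull of the data with respect to
the first `k` points (every convex representation `Σ q_i x_i = 0` of the origin assigns
total weight `≥ 1 − ε` to them), `D` is the diameter of the data, and `S` is a global
minimizer of `f(S) = Σ_i exp(⟨S, x_i⟩)`, then `‖S‖ ≥ (1/D) log(((1−ε)/ε)·((N−k)/k))`. -/
theorem minimizer_norm_lower_bound_almost_separable
    (d N : ℕ) (hdN : d < N) (x : Fin N → EuclideanSpace ℝ (Fin d))
    (D : ℝ) (hD : IsGreatest (Set.range fun p : Fin N × Fin N => ‖x p.1 - x p.2‖) D)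
    (hDpos : 0 < D)
    (ε : ℝ) (hε0 : 0 < ε) (hε1 : ε < 1)
    (k : ℕ) (hk : 1 ≤ k) (hkN : k ≤ N)
    (hclose : ∀ q : Fin N → ℝ, (∀ i, 0 ≤ q i) → (∑ i, q i) = 1 →
      (∑ i, q i • x i) = 0 →
      1 - ε ≤ ∑ i ∈ Finset.univ.filter (fun i : Fin N => (i : ℕ) < k), q i)
    (S : EuclideanSpace ℝ (Fin d))
    (hmin : ∀ S' : EuclideanSpace ℝ (Fin d),
      (∑ i, Real.exp ⟪S, x i⟫) ≤ ∑ i, Real.exp ⟪S', x i⟫) :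
    (1 / D) * Real.log (((1 - ε) / ε) * (((N : ℝ) - k) / k)) ≤ ‖S‖ := by
  have Npos : 0 < N := lt_of_le_of_lt (Nat.zero_le d) hdN
  set L : ℝ := ((1 - ε) / ε) * (((N : ℝ) - k) / k) with hLdef
  have hkR : (0:ℝ) < k := by exact_mod_cast hk
  have hNk0 : (0:ℝ) ≤ (N:ℝ) - k := sub_nonneg.mpr (by exact_mod_cast hkN)
  have hL0 : 0 ≤ L :=
    mul_nonneg (div_nonneg (by linarith) hε0.le) (div_nonneg hNk0 hkR.le)
  -- gradient at minimizer vanishes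
  have hgrad : ∀ v : EuclideanSpace ℝ (Fin d),
      (∑ i, Real.exp ⟪S, x i⟫ * ⟪v, x i⟫) = 0 := by
    intro v
    set g : ℝ → ℝ := fun t => ∑ i, Real.exp (⟪S, x i⟫ + t * ⟪v, x i⟫) with hg
    have hderiv : HasDerivAt g (∑ i, Real.exp ⟪S, x i⟫ * ⟪v, x i⟫) 0 := by
      have h1 : HasDerivAt g
          (∑ i ∈ Finset.univ, Real.exp (⟪S, x i⟫ + 0 * ⟪v, x i⟫) * ⟪v, x i⟫) 0 :=
        HasDerivAt.fun_sum fun i _ =>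
          ((hasDerivAt_mul_const ⟪v, x i⟫).const_add ⟪S, x i⟫).exp
      simpa using h1
    have hmin' : IsLocalMin g 0 := by
      apply Filter.Eventually.of_forall
      intro t
      have h0 : g 0 = ∑ i, Real.exp ⟪S, x i⟫ := by simp [hg]
      have ht : g t = ∑ i, Real.exp ⟪S + t • v, x i⟫ := by
        simp [hg, inner_add_left, real_inner_smul_left, Finset.mul_sum, mul_assoc]
      rw [h0, ht]; exact hmin _
    exact hmin'.hasDerivAt_eq_zero hderiv
  have hw : (∑ i, Real.exp ⟪S, x i⟫ • x i) = 0 := by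
    set w : EuclideanSpace ℝ (Fin d) := ∑ i, Real.exp ⟪S, x i⟫ • x i with hwdef
    have hww : ⟪w, w⟫ = 0 := by
      have h1 : ⟪w, w⟫ = ∑ i, Real.exp ⟪S, x i⟫ * ⟪w, x i⟫ := by
        rw [hwdef, inner_sum]
        exact Finset.sum_congr rfl fun i _ => real_inner_smul_right _ _ _
      rw [h1]; exact hgrad w
    exact inner_self_eq_zero.mp hww
  set T : ℝ := ∑ i, Real.exp ⟪S, x i⟫ with hTdef
  have hT : 0 < T :=
    Finset.sum_pos (fun i _ => Real.exp_pos _) ⟨⟨0, Npos⟩, Finset.mem_univ _⟩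
  set q : Fin N → ℝ := fun i => Real.exp ⟪S, x i⟫ / T with hqdef
  have hq0 : ∀ i, 0 ≤ q i := fun i => div_nonneg (Real.exp_pos _).le hT.le
  have hqpos : ∀ i, 0 < q i := fun i => div_pos (Real.exp_pos _) hT
  have hq1 : (∑ i, q i) = 1 := by
    rw [hqdef]
    rw [← Finset.sum_div, ← hTdef, div_self hT.ne']
  have hqx : (∑ i, q i • x i) = 0 := by
    have h1 : (∑ i, q i • x i) = T⁻¹ • ∑ i, Real.exp ⟪S, x i⟫ • x i := by
      rw [Finset.smul_sum]
      exact Finset.sum_congr rfl fun i _ => by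
        rw [smul_smul]; congr 1; rw [hqdef]; field_simp
    rw [h1, hw, smul_zero]
  have hcl := hclose q hq0 hq1 hqx
  by_cases hL1 : L ≤ 1
  · have hlog : Real.log L ≤ 0 := Real.log_nonpos hL0 hL1
    have : (1 / D) * Real.log L ≤ 0 :=
      mul_nonpos_of_nonneg_of_nonpos (by positivity) hlog
    exact this.trans (norm_nonneg S)
  · push_neg at hL1
    have hfac : 0 < (1 - ε) / ε := div_pos (by linarith) hε0
    have h2 : 0 < ((N:ℝ) - k) / k := by
      rcases lt_or_ge 0 (((N:ℝ) - k) / k) with h | h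
      · exact h
      · have : L ≤ 0 := mul_nonpos_of_nonneg_of_nonpos hfac.le h
        linarith
    have hnum : 0 < (N:ℝ) - k := by
      rcases div_pos_iff.mp h2 with ⟨h, _⟩ | ⟨_, h⟩
      · exact h
      · linarith
    have hkNlt : k < N := by
      have : (k:ℝ) < N := by linarith
      exact_mod_cast this
    set A := Finset.univ.filter (fun i : Fin N => (i : ℕ) < k) with hAdef
    set B := Finset.univ.filter (fun i : Fin N => ¬ (i : ℕ) < k) with hBdef
    have hAcard : A.card ≤ k := by
      have h1 : A.card ≤ (Finset.range k).card :=
        Finset.card_le_card_of_injOn Fin.val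
          (fun i hi => Finset.mem_range.mpr (by simpa using (Finset.mem_filter.mp hi).2))
          (fun a _ b _ h => Fin.val_injective h)
      simpa using h1
    have hsplit : A.card + B.card = N := by
      rw [hAdef, hBdef, Finset.card_filter_add_card_filter_not]
      simp
    have hBcard : N - k ≤ B.card := by omega
    have hBcast : (N:ℝ) - k ≤ (B.card : ℝ) := by
      have h1 : ((N - k : ℕ) : ℝ) ≤ (B.card : ℝ) := Nat.cast_le.mpr hBcard
      rwa [Nat.cast_sub hkN] at h1
    have hAne : A.Nonempty := ⟨⟨0, Npos⟩, Finset.mem_filter.mpr ⟨Finset.mem_univ _, hk⟩⟩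
    have hBne : B.Nonempty := Finset.card_pos.mp (by omega)
    have hsumAB : (∑ i ∈ A, q i) + (∑ i ∈ B, q i) = 1 := by
      rw [hAdef, hBdef, Finset.sum_filter_add_sum_filter_not, hq1]
    have hsumB : ∑ i ∈ B, q i ≤ ε := by linarith
    -- find a big coordinate among the first k
    obtain ⟨i0, _, hi0⟩ : ∃ i ∈ A, (1 - ε) / k ≤ q i := by
      apply Finset.exists_le_of_sum_le hAne
      rw [Finset.sum_const, nsmul_eq_mul]
      have h1 : (A.card:ℝ) * ((1 - ε)/k) ≤ (k:ℝ) * ((1 - ε)/k) :=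
        mul_le_mul_of_nonneg_right (Nat.cast_le.mpr hAcard)
          (div_nonneg (by linarith) hkR.le)
      have h2' : (k:ℝ) * ((1 - ε)/k) = 1 - ε := by field_simp
      linarith
    -- find a small coordinate among the rest
    obtain ⟨j0, _, hj0⟩ : ∃ j ∈ B, q j ≤ ε / ((N:ℝ) - k) := by
      apply Finset.exists_le_of_sum_le hBne
      rw [Finset.sum_const, nsmul_eq_mul]
      have h1 : ((N:ℝ) - k) * (ε/((N:ℝ) - k)) ≤ (B.card:ℝ) * (ε/((N:ℝ) - k)) :=
        mul_le_mul_of_nonneg_right hBcast (div_nonneg hε0.le hnum.le)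
      have h2' : ((N:ℝ) - k) * (ε/((N:ℝ) - k)) = ε := by field_simp
      linarith
    have heq : q i0 / q j0 = Real.exp ⟪S, x i0 - x j0⟫ := by
      rw [inner_sub_right, Real.exp_sub, hqdef]
      field_simp
    have hLle : L ≤ q i0 / q j0 := by
      have hL' : L = ((1 - ε)/k) / (ε/((N:ℝ) - k)) := by
        rw [hLdef]; field_simp
      rw [hL']
      exact div_le_div₀ (hq0 i0) hi0 (hqpos j0) hj0
    rw [heq] at hLle
    have hlog : Real.log L ≤ ⟪S, x i0 - x j0⟫ :=
      (Real.log_le_iff_le_exp (by linarith)).mpr hLle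
    have hinner : ⟪S, x i0 - x j0⟫ ≤ ‖S‖ * ‖x i0 - x j0‖ := real_inner_le_norm _ _
    have hDle : ‖x i0 - x j0‖ ≤ D := hD.2 ⟨(i0, j0), rfl⟩
    have hfin : Real.log L ≤ ‖S‖ * D :=
      hlog.trans (hinner.trans (mul_le_mul_of_nonneg_left hDle (norm_nonneg S)))
    have h3 : (1/D) * Real.log L = Real.log L / D := by ring
    rw [h3, div_le_iff₀ hDpos]
    linarith
end

section
/- (Divergence of the conformal time.) Let η > 0, C > 0, and let b : [0, ∞) → ℝ be a differentiable function satisfying b'(t) ≥ −ηC·e^{b(t)} for all t ≥ 0. Then e^{b(t)} ≥ 1/(e^{−b(0)} + ηCt) for all t ≥ 0, and consequently the conformal time τ(t) = ∫₀^t e^{b(t')} dt' diverges: τ(t) → ∞ as t → ∞. -/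
open Filter

/-- **divergence of the conformal time.** If `b : [0,∞) → ℝ` is
differentiable with `b'(t) ≥ −ηC e^{b(t)}`, then `e^{b(t)} ≥ 1/(e^{−b(0)} + ηCt)`, and
the conformal time `τ(t) = ∫₀^t e^{b(t')} dt'` diverges as `t → ∞`. -/
theorem conformal_time_diverges
    (η C : ℝ) (hη : 0 < η) (hC : 0 < C)
    (b b' : ℝ → ℝ)
    (hderiv : ∀ t ≥ (0 : ℝ), HasDerivWithinAt b (b' t) (Set.Ici 0) t)
    (hineq : ∀ t ≥ (0 : ℝ), -η * C * Real.exp (b t) ≤ b' t) :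
    (∀ t ≥ (0 : ℝ), 1 / (Real.exp (-(b 0)) + η * C * t) ≤ Real.exp (b t)) ∧
    Tendsto (fun t => ∫ s in (0 : ℝ)..t, Real.exp (b s)) atTop atTop := by
  have hηC : 0 < η * C := mul_pos hη hC
  set A : ℝ := Real.exp (-(b 0)) with hA
  have hApos : 0 < A := Real.exp_pos _
  -- continuity of b on Ici 0
  have hbc : ContinuousOn b (Set.Ici 0) := fun t ht =>
    (hderiv t ht).continuousWithinAt
  -- the auxiliary function g t = exp(-(b t)) - ηC t is antitone on Ici 0
  have hg : AntitoneOn (fun t => Real.exp (-(b t)) - η * C * t) (Set.Ici 0) := by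
    apply antitoneOn_of_hasDerivWithinAt_nonpos (convex_Ici 0)
      (f' := fun t => Real.exp (-(b t)) * (-(b' t)) - η * C)
    · exact ((hbc.neg.rexp).sub (continuousOn_const.mul continuousOn_id))
    · intro t ht
      rw [interior_Ici] at ht
      have h1 : HasDerivWithinAt (fun s => Real.exp (-(b s)))
          (Real.exp (-(b t)) * (-(b' t))) (Set.Ioi 0) t := by
        exact (Real.hasDerivAt_exp (-(b t))).comp_hasDerivWithinAt t
          (((hderiv t (le_of_lt ht)).mono Set.Ioi_subset_Ici_self).neg)
      have h2 : HasDerivWithinAt (fun s => η * C * s) (η * C) (Set.Ioi 0) t := by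
        simpa using (hasDerivWithinAt_id t (Set.Ioi 0)).const_mul (η * C)
      rw [interior_Ici]
      exact (h1.sub h2)
    · intro t ht
      rw [interior_Ici] at ht
      have hb' := hineq t ht.le
      have : Real.exp (-(b t)) * (-(b' t)) ≤ η * C := by
        have h3 : -(b' t) ≤ η * C * Real.exp (b t) := by nlinarith
        calc Real.exp (-(b t)) * (-(b' t))
            ≤ Real.exp (-(b t)) * (η * C * Real.exp (b t)) := by
              exact mul_le_mul_of_nonneg_left h3 (Real.exp_pos _).le
          _ = η * C := by
              rw [Real.exp_neg]; field_simp
      linarith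
  -- key bound: exp(-(b t)) ≤ A + ηC t
  have hkey : ∀ t ≥ (0 : ℝ), Real.exp (-(b t)) ≤ A + η * C * t := by
    intro t ht
    have := hg (Set.self_mem_Ici) ht ht
    simp only [mul_zero, sub_zero] at this
    linarith
  have hpt : ∀ t ≥ (0 : ℝ), 1 / (A + η * C * t) ≤ Real.exp (b t) := by
    intro t ht
    have hpos : 0 < Real.exp (-(b t)) := Real.exp_pos _
    have h4 : 1 / (A + η * C * t) ≤ 1 / Real.exp (-(b t)) :=
      one_div_le_one_div_of_le hpos (hkey t ht)
    simpa [Real.exp_neg] using h4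
  refine ⟨hpt, ?_⟩
  -- divergence
  have hF : ∀ t ≥ (0 : ℝ),
      (η * C)⁻¹ * (Real.log (A + η * C * t) - Real.log A) ≤
        ∫ s in (0:ℝ)..t, Real.exp (b s) := by
    intro t ht
    have hFd : ∀ s ∈ Set.uIcc (0:ℝ) t,
        HasDerivAt (fun u => (η * C)⁻¹ * Real.log (A + η * C * u))
          ((A + η * C * s)⁻¹) s := by
      intro s hs
      rw [Set.uIcc_of_le ht] at hs
      have hs0 : 0 < A + η * C * s := add_pos_of_pos_of_nonneg hApos
        (mul_nonneg hηC.le hs.1)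
      have h5 : HasDerivAt (fun u => A + η * C * u) (η * C) s := by
        simpa using ((hasDerivAt_id s).const_mul (η * C)).const_add A
      have h6 := (Real.hasDerivAt_log hs0.ne').comp s h5
      have h7 := h6.const_mul ((η * C)⁻¹)
      exact h7.congr_deriv (by rw [mul_left_comm, inv_mul_cancel₀ hηC.ne', mul_one])
    have hint : IntervalIntegrable (fun s => (A + η * C * s)⁻¹)
        MeasureTheory.volume 0 t := by
      apply ContinuousOn.intervalIntegrable
      rw [Set.uIcc_of_le ht]
      exact ContinuousOn.inv₀ (by fun_prop) fun s hs =>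
        (add_pos_of_pos_of_nonneg hApos (mul_nonneg hηC.le hs.1)).ne'
    have heq : ∫ s in (0:ℝ)..t, (A + η * C * s)⁻¹ =
        (η * C)⁻¹ * Real.log (A + η * C * t) -
        (η * C)⁻¹ * Real.log (A + η * C * 0) :=
      intervalIntegral.integral_eq_sub_of_hasDerivAt hFd hint
    have hmono : ∫ s in (0:ℝ)..t, (A + η * C * s)⁻¹ ≤
        ∫ s in (0:ℝ)..t, Real.exp (b s) := by
      apply intervalIntegral.integral_mono_on ht hint
      · apply ContinuousOn.intervalIntegrable
        rw [Set.uIcc_of_le ht]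
        exact (hbc.mono (fun s hs => hs.1)).rexp
      · intro s hs
        have := hpt s hs.1
        rwa [one_div] at this
    calc (η * C)⁻¹ * (Real.log (A + η * C * t) - Real.log A)
        = ∫ s in (0:ℝ)..t, (A + η * C * s)⁻¹ := by
          rw [heq]; ring_nf
      _ ≤ _ := hmono
  have htend : Tendsto (fun t => (η * C)⁻¹ *
      (Real.log (A + η * C * t) - Real.log A)) atTop atTop := by
    apply Tendsto.const_mul_atTop (by positivity)
    apply tendsto_atTop_add_const_right
    have h8 : Tendsto (fun x : ℝ => η * C * x) atTop atTop :=
      Tendsto.const_mul_atTop hηC tendsto_id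
    exact Real.tendsto_log_atTop.comp (tendsto_atTop_add_const_left atTop A h8)
  exact tendsto_atTop_mono' atTop
    (eventually_atTop.2 ⟨0, fun t ht => hF t ht⟩) htend
end

section
/- (Conformal-time reparametrization of the weight trajectory.) Let x_1, …, x_N ∈ ℝ^d, η > 0, and let S : [0, ∞) → ℝ^d and b : [0, ∞) → ℝ be differentiable functions solving the gradient-flow equations dS/dt = −(η/N)·e^{b(t)}·Σ_i e^{⟨S(t), x_i⟩}·x_i and db/dt = −(η/N)·e^{b(t)}·Σ_i e^{⟨S(t), x_i⟩}. Define the conformal time T(t) = ∫₀^t e^{b(s)} ds, a strictly increasing C¹ function onto [0, τ*), and let u = S ∘ T⁻¹ : [0, τ*) → ℝ^d. Then u is differentiable and solves the bias-free flow du/dτ = −(η/N)·Σ_i e^{⟨u(τ), x_i⟩}·x_i on [0, τ*). -/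
open RealInnerProductSpace Filter Topology

/-- Auxiliary lemma: derivative of the reparametrized trajectory. -/
lemma aux_inv_deriv {E : Type*} [NormedAddCommGroup E] [NormedSpace ℝ E]
    (T ι : ℝ → ℝ) (S : ℝ → E) (S' : E) (c : ℝ) (hc : 0 < c) (t : ℝ) (ht : 0 ≤ t)
    (hmono : StrictMonoOn T (Set.Ici 0))
    (hTcont : ContinuousOn T (Set.Ici 0))
    (hT0 : T 0 = 0)
    (hTt : HasDerivWithinAt T c (Set.Ici 0) t)
    (hS : HasDerivWithinAt S S' (Set.Ici 0) t)
    (hι : ∀ r ≥ (0:ℝ), ι (T r) = r) :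
    HasDerivWithinAt (S ∘ ι) (c⁻¹ • S') (Set.Ici 0) (T t) := by
  have ht1 : (0:ℝ) ≤ t + 1 := by linarith
  have hlt : T t < T (t + 1) := hmono ht ht1 (by linarith)
  have hτ0 : 0 ≤ T t := by
    rcases eq_or_lt_of_le ht with h | h
    · rw [← h, hT0]
    · rw [← hT0]
      exact (hmono Set.self_mem_Ici ht h).le
  set B : Set ℝ := Set.Icc 0 (T (t + 1)) with hB
  have hsurj : B ⊆ T '' Set.Icc 0 (t + 1) := by
    have h := intermediate_value_Icc ht1 (hTcont.mono Set.Icc_subset_Ici_self)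
    rw [hT0] at h
    exact h
  have hinv : ∀ τ ∈ B, ι τ ∈ Set.Icc (0:ℝ) (t + 1) ∧ T (ι τ) = τ := by
    intro τ hτ
    obtain ⟨s, hs, hTs⟩ := hsurj hτ
    have hιτ : ι τ = s := by rw [← hTs, hι s hs.1]
    rw [hιτ, hTs]
    exact ⟨hs, rfl⟩
  have hBmem : B ∈ 𝓝[Set.Ici 0] (T t) :=
    Filter.mem_of_superset
      (Filter.inter_mem (mem_nhdsWithin_of_mem_nhds (Iio_mem_nhds hlt)) self_mem_nhdsWithin)
      (fun τ hτ => ⟨hτ.2, hτ.1.le⟩)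
  have hcont : Filter.Tendsto ι (𝓝[B] (T t)) (𝓝 t) := by
    refine tendsto_order.2 ⟨fun l hl => ?_, fun u hu => ?_⟩
    · rcases lt_or_ge l 0 with hl0 | hl0
      · filter_upwards [self_mem_nhdsWithin] with τ hτ
        exact lt_of_lt_of_le hl0 (hinv τ hτ).1.1
      · have hTl : T l < T t := hmono hl0 ht hl
        filter_upwards [self_mem_nhdsWithin,
          mem_nhdsWithin_of_mem_nhds (Ioi_mem_nhds hTl)] with τ hτ hτ'
        by_contra h
        push_neg at h
        have h2 : T (ι τ) ≤ T l :=
          hmono.monotoneOn (Set.mem_Ici.2 (hinv τ hτ).1.1) (Set.mem_Ici.2 hl0) h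
        rw [(hinv τ hτ).2] at h2
        exact absurd hτ' (by simpa using h2.not_gt)
    · rcases le_or_gt u (t + 1) with hu1 | hu1
      · have hu0 : (0:ℝ) ≤ u := le_of_lt (lt_of_le_of_lt ht hu)
        have hTu : T t < T u := hmono ht hu0 hu
        filter_upwards [self_mem_nhdsWithin,
          mem_nhdsWithin_of_mem_nhds (Iio_mem_nhds hTu)] with τ hτ hτ'
        by_contra h
        push_neg at h
        have h2 : T u ≤ T (ι τ) :=
          hmono.monotoneOn (Set.mem_Ici.2 hu0) (Set.mem_Ici.2 (hinv τ hτ).1.1) h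
        rw [(hinv τ hτ).2] at h2
        exact absurd hτ' (by simpa using h2.not_gt)
      · filter_upwards [self_mem_nhdsWithin] with τ hτ
        exact lt_of_le_of_lt (hinv τ hτ).1.2 hu1
  have hde : HasDerivWithinAt ι c⁻¹ B (T t) := by
    rw [hasDerivWithinAt_iff_tendsto_slope]
    have h1 : Filter.Tendsto ι (𝓝[B \ {T t}] (T t)) (𝓝[Set.Ici 0 \ {t}] t) := by
      rw [tendsto_nhdsWithin_iff]
      refine ⟨hcont.mono_left (nhdsWithin_mono _ Set.diff_subset), ?_⟩
      filter_upwards [self_mem_nhdsWithin] with τ hτ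
      refine ⟨Set.mem_Ici.2 (hinv τ hτ.1).1.1, fun h => hτ.2 ?_⟩
      have h2 := (hinv τ hτ.1).2
      simp only [Set.mem_singleton_iff] at h ⊢
      rw [← h2, h]
    have h2 : Filter.Tendsto (slope T t) (𝓝[Set.Ici 0 \ {t}] t) (𝓝 c) :=
      hasDerivWithinAt_iff_tendsto_slope.1 hTt
    refine ((h2.comp h1).inv₀ hc.ne').congr' ?_
    filter_upwards [self_mem_nhdsWithin] with τ hτ
    have hiT := (hinv τ hτ.1).2
    simp only [Function.comp_apply, slope_def_field]
    rw [hiT, hι t ht, inv_div]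
  have hmain := HasDerivWithinAt.scomp_of_eq (T t) hS hde
      (fun τ hτ => Set.mem_Ici.2 (hinv τ hτ).1.1) (hι t ht).symm
  exact hmain.mono_of_mem_nhdsWithin hBmem

/-- **conformal-time reparametrization of the weight trajectory.**
If `(S, b)` solves the gradient flow of the exponential loss with bias, the conformal
time `T(t) = ∫₀^t e^{b(s)} ds` is strictly increasing on `[0,∞)`, and if `ι` inverts `T`
on `[0,∞)` then `u = S ∘ ι` solves the bias-free flow
`du/dτ = −(η/N) Σ_i e^{⟨u(τ), x_i⟩} x_i` at every conformal time `τ = T(t)`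
(these exhaust `[0, τ*)`, the range of `T`). -/
theorem conformal_time_reparametrization
    (d N : ℕ) (hN : 0 < N) (x : Fin N → EuclideanSpace ℝ (Fin d))
    (η : ℝ) (hη : 0 < η)
    (S : ℝ → EuclideanSpace ℝ (Fin d)) (b : ℝ → ℝ)
    (hS : ∀ t ≥ (0 : ℝ), HasDerivWithinAt S
      (-((η / N) * Real.exp (b t)) • ∑ i, Real.exp ⟪S t, x i⟫ • x i) (Set.Ici 0) t)
    (hb : ∀ t ≥ (0 : ℝ), HasDerivWithinAt b
      (-(η / N) * Real.exp (b t) * ∑ i, Real.exp ⟪S t, x i⟫) (Set.Ici 0) t)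
    (ι : ℝ → ℝ)
    (hι : ∀ t ≥ (0 : ℝ), ι (∫ s in (0 : ℝ)..t, Real.exp (b s)) = t) :
    StrictMonoOn (fun t => ∫ s in (0 : ℝ)..t, Real.exp (b s)) (Set.Ici 0) ∧
    ∀ t ≥ (0 : ℝ), HasDerivWithinAt (S ∘ ι)
      (-(η / N : ℝ) •
        ∑ i, Real.exp ⟪(S ∘ ι) (∫ s in (0 : ℝ)..t, Real.exp (b s)), x i⟫ • x i)
      (Set.Ici 0) (∫ s in (0 : ℝ)..t, Real.exp (b s)) := by
  have hbc : ContinuousOn b (Set.Ici 0) := fun s hs => (hb s hs).continuousWithinAt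
  have hfc : ContinuousOn (fun s => Real.exp (b s)) (Set.Ici 0) := fun s hs =>
    Real.continuous_exp.continuousAt.comp_continuousWithinAt (hbc s hs)
  have hint : ∀ r ≥ (0:ℝ), ∀ r' ≥ (0:ℝ),
      IntervalIntegrable (fun s => Real.exp (b s)) MeasureTheory.volume r r' := by
    intro r hr r' hr'
    refine (hfc.mono fun y hy => ?_).intervalIntegrable
    exact le_trans (le_min hr hr') hy.1
  have hT : ∀ t ≥ (0:ℝ), HasDerivWithinAt (fun r => ∫ s in (0:ℝ)..r, Real.exp (b s))
      (Real.exp (b t)) (Set.Ici 0) t := by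
    intro t ht
    rcases eq_or_lt_of_le ht with h0 | h0
    · have hmeas : StronglyMeasurableAtFilter (fun s => Real.exp (b s)) (𝓝[Set.Ioi 0] (0:ℝ)) :=
        ⟨Set.Ici 0, Filter.mem_of_superset self_mem_nhdsWithin Set.Ioi_subset_Ici_self,
          hfc.aestronglyMeasurable measurableSet_Ici⟩
      have hco : ContinuousWithinAt (fun s => Real.exp (b s)) (Set.Ioi 0) 0 :=
        (hfc 0 Set.self_mem_Ici).mono Set.Ioi_subset_Ici_self
      have := intervalIntegral.integral_hasDerivWithinAt_right (s := Set.Ici 0) (t := Set.Ioi 0)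
        (hint 0 le_rfl 0 le_rfl) hmeas hco
      rw [← h0]
      simpa using this
    · have hIci : Set.Ici (0:ℝ) ∈ 𝓝 t := Ici_mem_nhds h0
      have hmeas : StronglyMeasurableAtFilter (fun s => Real.exp (b s)) (𝓝 t) :=
        ⟨Set.Ici 0, hIci, hfc.aestronglyMeasurable measurableSet_Ici⟩
      have := intervalIntegral.integral_hasDerivAt_right
        (hint 0 le_rfl t ht) hmeas ((hfc t ht).continuousAt hIci)
      exact this.hasDerivWithinAt
  have hmono : StrictMonoOn (fun r => ∫ s in (0:ℝ)..r, Real.exp (b s)) (Set.Ici 0) := by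
    intro r hr r' hr' hrr
    have hadd := intervalIntegral.integral_add_adjacent_intervals
      (hint 0 le_rfl r hr) (hint r hr r' hr')
    have hpos : 0 < ∫ s in r..r', Real.exp (b s) :=
      intervalIntegral.intervalIntegral_pos_of_pos_on (hint r hr r' hr')
        (fun y _ => Real.exp_pos _) hrr
    show (∫ s in (0:ℝ)..r, Real.exp (b s)) < ∫ s in (0:ℝ)..r', Real.exp (b s)
    linarith
  refine ⟨hmono, ?_⟩
  intro t ht
  have harg : (S ∘ ι) (∫ s in (0:ℝ)..t, Real.exp (b s)) = S t := by
    simp only [Function.comp_apply]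
    rw [hι t ht]
  have hvec : -(η / N : ℝ) • ∑ i, Real.exp ⟪S t, x i⟫ • x i
      = (Real.exp (b t))⁻¹ •
        (-((η / N) * Real.exp (b t)) • ∑ i, Real.exp ⟪S t, x i⟫ • x i) := by
    rw [smul_smul]
    congr 1
    field_simp
  rw [harg, hvec]
  exact aux_inv_deriv (fun r => ∫ s in (0:ℝ)..r, Real.exp (b s)) ι S _ _
    (Real.exp_pos (b t)) t ht hmono (fun r hr => (hT r hr).continuousWithinAt)
    (by simp) (hT t ht) (hS t ht) (fun r hr => hι r hr)
end

section
/- (Exact solution of the simplified model, inseparable case x_2 = 1.) Let η > 0 and S_0 < 0. Define S : [0, ∞) → ℝ by S(τ) = log( tanh( (ητ)/2 + artanh(e^{S_0}) ) ). Then S is differentiable, S(0) = S_0, and S solves the conformal-time gradient-flow equation dS/dτ = −(η/2)·(e^{S(τ)} − e^{−S(τ)}) for all τ ≥ 0. -/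
/-- The inverse hyperbolic tangent, `artanh z = (1/2) log((1+z)/(1−z))` (for `z ∈ (−1,1)`). -/
noncomputable def artanh (z : ℝ) : ℝ := (1 / 2) * Real.log ((1 + z) / (1 - z))

lemma tanh_eq_exp (x : ℝ) :
    Real.tanh x = (Real.exp (2 * x) - 1) / (Real.exp (2 * x) + 1) := by
  rw [Real.tanh_eq_sinh_div_cosh, Real.sinh_eq, Real.cosh_eq]
  have h1 : Real.exp x > 0 := Real.exp_pos x
  have h2 : Real.exp (-x) > 0 := Real.exp_pos (-x)
  have h3 : Real.exp (2 * x) = Real.exp x * Real.exp x := by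
    rw [← Real.exp_add]; ring_nf
  have h4 : Real.exp x * Real.exp (-x) = 1 := by
    rw [← Real.exp_add]; simp
  field_simp
  rw [show x * 2 = 2 * x by ring, h3]
  linear_combination (-2 * Real.exp x) * h4

lemma tanh_artanh (z : ℝ) (h0 : 0 < z) (h1 : z < 1) :
    Real.tanh (artanh z) = z := by
  have hw : (0:ℝ) < (1 + z) / (1 - z) := div_pos (by linarith) (by linarith)
  have he : Real.exp (2 * artanh z) = (1 + z) / (1 - z) := by
    unfold artanh
    rw [show 2 * ((1:ℝ)/2 * Real.log ((1+z)/(1-z))) = Real.log ((1+z)/(1-z)) by ring,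
      Real.exp_log hw]
  rw [tanh_eq_exp, he]
  have hz : (1:ℝ) - z ≠ 0 := by linarith
  field_simp
  ring

lemma artanh_pos (z : ℝ) (h0 : 0 < z) (h1 : z < 1) : 0 < artanh z := by
  unfold artanh
  have : (1:ℝ) < (1 + z) / (1 - z) := by
    rw [lt_div_iff₀ (by linarith)]; linarith
  have := Real.log_pos this
  linarith

/-- **exact solution of the simplified model, inseparable case `x₂ = 1`.**
The function `S(τ) = log(tanh(ητ/2 + artanh(e^{S₀})))` satisfies `S(0) = S₀` and solves
`dS/dτ = −(η/2)(e^{S} − e^{−S})` on `[0,∞)`. -/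
theorem simplified_model_solution_inseparable
    (η S₀ : ℝ) (hη : 0 < η) (hS₀ : S₀ < 0) :
    Real.log (Real.tanh (η * 0 / 2 + artanh (Real.exp S₀))) = S₀ ∧
    ∀ τ ≥ (0 : ℝ), HasDerivWithinAt
      (fun τ => Real.log (Real.tanh (η * τ / 2 + artanh (Real.exp S₀))))
      (-(η / 2) * (Real.exp (Real.log (Real.tanh (η * τ / 2 + artanh (Real.exp S₀))))
        - Real.exp (-(Real.log (Real.tanh (η * τ / 2 + artanh (Real.exp S₀)))))))
      (Set.Ici 0) τ := by
  set z := Real.exp S₀ with hz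
  have hz0 : 0 < z := Real.exp_pos S₀
  have hz1 : z < 1 := by
    rw [hz, ← Real.exp_zero]
    exact Real.exp_lt_exp.mpr hS₀
  have ha : 0 < artanh z := artanh_pos z hz0 hz1
  constructor
  · rw [show η * 0 / 2 + artanh z = artanh z by ring, tanh_artanh z hz0 hz1,
      hz, Real.log_exp]
  · intro τ hτ
    set a := artanh z
    have hu : 0 < η * τ / 2 + a := by positivity
    set u := η * τ / 2 + a with hudef
    have hs : 0 < Real.sinh u := Real.sinh_pos_iff.mpr hu
    have hc : 0 < Real.cosh u := Real.cosh_pos u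
    have hT : 0 < Real.tanh u := by
      rw [Real.tanh_eq_sinh_div_cosh]; positivity
    -- derivative of inner affine function
    have h1 : HasDerivAt (fun τ : ℝ => η * τ / 2 + a) (η / 2) τ := by
      have := ((hasDerivAt_id τ).const_mul η).div_const 2
      simpa using this.add_const a
    -- derivative of tanh
    have htanh : HasDerivAt Real.tanh (1 / Real.cosh u ^ 2) u := by
      have hq : HasDerivAt (fun x => Real.sinh x / Real.cosh x)
          ((Real.cosh u * Real.cosh u - Real.sinh u * Real.sinh u) / Real.cosh u ^ 2) u :=
        (Real.hasDerivAt_sinh u).div (Real.hasDerivAt_cosh u) (ne_of_gt hc)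
      have : (Real.cosh u * Real.cosh u - Real.sinh u * Real.sinh u) / Real.cosh u ^ 2
          = 1 / Real.cosh u ^ 2 := by
        have := Real.cosh_sq_sub_sinh_sq u
        rw [show Real.cosh u * Real.cosh u - Real.sinh u * Real.sinh u
          = Real.cosh u ^ 2 - Real.sinh u ^ 2 by ring, this]
      rw [this] at hq
      exact hq.congr_of_eventuallyEq (Filter.Eventually.of_forall
        fun x => (Real.tanh_eq_sinh_div_cosh x))
    have h2 : HasDerivAt (fun τ : ℝ => Real.tanh (η * τ / 2 + a))
        (1 / Real.cosh u ^ 2 * (η / 2)) τ := by have := htanh.comp τ h1; exact this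
    have h3 : HasDerivAt (fun τ : ℝ => Real.log (Real.tanh (η * τ / 2 + a)))
        ((Real.tanh u)⁻¹ * (1 / Real.cosh u ^ 2 * (η / 2))) τ :=
      by have := (Real.hasDerivAt_log (ne_of_gt hT)).comp τ h2; exact this
    have heq : (Real.tanh u)⁻¹ * (1 / Real.cosh u ^ 2 * (η / 2))
        = -(η / 2) * (Real.exp (Real.log (Real.tanh u))
          - Real.exp (-(Real.log (Real.tanh u)))) := by
      rw [Real.exp_neg, Real.exp_log hT, Real.tanh_eq_sinh_div_cosh, inv_div]
      have hid : Real.cosh u ^ 2 - Real.sinh u ^ 2 = 1 := Real.cosh_sq_sub_sinh_sq u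
      have hdiff : Real.sinh u / Real.cosh u - Real.cosh u / Real.sinh u
          = -(1 / (Real.sinh u * Real.cosh u)) := by
        rw [div_sub_div _ _ (ne_of_gt hc) (ne_of_gt hs)]
        rw [show Real.sinh u * Real.sinh u - Real.cosh u * Real.cosh u = -1 by nlinarith [hid]]
        ring
      rw [hdiff]
      field_simp
    rw [← heq]
    exact h3.hasDerivWithinAt
end

section
/- (Exact solution of the simplified model, separable case x_2 = −1.) Let η > 0 and S_0, b_0 ∈ ℝ. Define S, b : [0, ∞) → ℝ by S(τ) = S_0 + log(1 + ητ·e^{−S_0}) and b(τ) = b_0 − log(1 + ητ·e^{−S_0}). Then S and b are differentiable, S(0) = S_0, b(0) = b_0, and they solve the conformal-time gradient-flow equations dS/dτ = η·e^{−S(τ)} and db/dτ = −η·e^{−S(τ)} for all τ ≥ 0; in particular b(τ) + S(τ) = b_0 + S_0 for all τ and b(τ)/S(τ) → −1 as τ → ∞. -/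
open Filter

/-- **exact solution of the simplified model, separable case `x₂ = −1`.**
The functions `S(τ) = S₀ + log(1 + ητ e^{−S₀})` and `b(τ) = b₀ − log(1 + ητ e^{−S₀})`
satisfy `S(0) = S₀`, `b(0) = b₀`, solve `dS/dτ = η e^{−S}` and `db/dτ = −η e^{−S}` on
`[0,∞)`, conserve `b + S = b₀ + S₀`, and satisfy `b(τ)/S(τ) → −1` as `τ → ∞`. -/
theorem simplified_model_solution_separable
    (η S₀ b₀ : ℝ) (hη : 0 < η) :
    S₀ + Real.log (1 + η * 0 * Real.exp (-S₀)) = S₀ ∧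
    b₀ - Real.log (1 + η * 0 * Real.exp (-S₀)) = b₀ ∧
    (∀ τ ≥ (0 : ℝ), HasDerivWithinAt
      (fun τ => S₀ + Real.log (1 + η * τ * Real.exp (-S₀)))
      (η * Real.exp (-(S₀ + Real.log (1 + η * τ * Real.exp (-S₀)))))
      (Set.Ici 0) τ) ∧
    (∀ τ ≥ (0 : ℝ), HasDerivWithinAt
      (fun τ => b₀ - Real.log (1 + η * τ * Real.exp (-S₀)))
      (-η * Real.exp (-(S₀ + Real.log (1 + η * τ * Real.exp (-S₀)))))
      (Set.Ici 0) τ) ∧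
    (∀ τ : ℝ, (b₀ - Real.log (1 + η * τ * Real.exp (-S₀)))
        + (S₀ + Real.log (1 + η * τ * Real.exp (-S₀))) = b₀ + S₀) ∧
    Tendsto (fun τ => (b₀ - Real.log (1 + η * τ * Real.exp (-S₀)))
        / (S₀ + Real.log (1 + η * τ * Real.exp (-S₀)))) atTop (nhds (-1)) := by
  have hc : 0 < η * Real.exp (-S₀) := mul_pos hη (Real.exp_pos _)
  have hu : ∀ τ : ℝ, 0 ≤ τ → 0 < 1 + η * τ * Real.exp (-S₀) := by
    intro τ hτ
    have : 0 ≤ η * τ * Real.exp (-S₀) := by positivity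
    linarith
  have hlog : ∀ τ : ℝ, 0 ≤ τ → HasDerivAt
      (fun τ => Real.log (1 + η * τ * Real.exp (-S₀)))
      (η * Real.exp (-(S₀ + Real.log (1 + η * τ * Real.exp (-S₀))))) τ := by
    intro τ hτ
    have h1 : HasDerivAt (fun τ : ℝ => 1 + η * τ * Real.exp (-S₀))
        (η * Real.exp (-S₀)) τ := by
      have : HasDerivAt (fun τ : ℝ => τ) 1 τ := hasDerivAt_id τ
      have := ((this.const_mul η).mul_const (Real.exp (-S₀))).const_add 1
      simpa using this
    have h2 := h1.log (ne_of_gt (hu τ hτ))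
    have heq : η * Real.exp (-S₀) / (1 + η * τ * Real.exp (-S₀))
        = η * Real.exp (-(S₀ + Real.log (1 + η * τ * Real.exp (-S₀)))) := by
      rw [neg_add, Real.exp_add, Real.exp_neg (Real.log _),
        Real.exp_log (hu τ hτ)]
      field_simp
    rw [heq] at h2
    exact h2
  refine ⟨by simp, by simp, ?_, ?_, ?_, ?_⟩
  · intro τ hτ
    exact (((hlog τ hτ).const_add S₀).hasDerivWithinAt)
  · intro τ hτ
    have := ((hlog τ hτ).const_sub b₀).hasDerivWithinAt (s := Set.Ici 0)
    simpa [neg_mul] using this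
  · intro τ; ring
  · have hL : Tendsto (fun τ : ℝ => Real.log (1 + η * τ * Real.exp (-S₀)))
        atTop atTop := by
      apply Real.tendsto_log_atTop.comp
      apply tendsto_atTop_add_const_left
      exact (tendsto_id.const_mul_atTop hη).atTop_mul_const (Real.exp_pos (-S₀))
    set L := fun τ : ℝ => Real.log (1 + η * τ * Real.exp (-S₀)) with hLdef
    have hne : ∀ᶠ τ in atTop, L τ ≠ 0 := by
      filter_upwards [hL.eventually_gt_atTop 0] with τ h using ne_of_gt h
    have hmain : Tendsto (fun τ => (b₀ / L τ - 1) / (S₀ / L τ + 1)) atTop (nhds (-1)) := by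
      have h1 : Tendsto (fun τ => b₀ / L τ) atTop (nhds 0) :=
        (tendsto_const_nhds (x := b₀)).div_atTop hL
      have h2 : Tendsto (fun τ => S₀ / L τ) atTop (nhds 0) :=
        (tendsto_const_nhds (x := S₀)).div_atTop hL
      have := (h1.sub (tendsto_const_nhds (x := (1:ℝ)))).div
        (h2.add (tendsto_const_nhds (x := (1:ℝ)))) (by norm_num)
      simpa [Pi.div_def] using this
    apply hmain.congr'
    filter_upwards [hne] with τ h
    field_simp
    rfl
end

section
/- (Real-time asymptotics at the critical point of the simplified model.) Let η > 0 and S_0, b_0 ∈ ℝ, and let S, b : [0, ∞) → ℝ be differentiable functions with S(0) = S_0, b(0) = b_0 solving the real-time gradient-flow equations of the simplified model at x_2 = 0: dS/dt = (η/2)·e^{b(t) − S(t)} and db/dt = −(η/2)·e^{b(t)}·(e^{−S(t)} + 1). Then as t → ∞, b(t)/log t → −1 and S(t)/log(log t) → 1; in particular S(t) → ∞ while S(t)/b(t) → 0. -/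
open Filter Real


lemma myMono {f f' : ℝ → ℝ}
    (hf : ∀ t ∈ Set.Ici (0:ℝ), HasDerivWithinAt f (f' t) (Set.Ici 0) t)
    (h0 : ∀ t ∈ Set.Ici (0:ℝ), 0 ≤ f' t) : MonotoneOn f (Set.Ici 0) := by
  apply monotoneOn_of_hasDerivWithinAt_nonneg (convex_Ici 0)
    (fun x hx => (hf x hx).continuousWithinAt)
    (fun x hx => ((hf x (interior_subset hx)).mono interior_subset))
    (fun x hx => h0 x (interior_subset hx))

lemma ratio_one {f g : ℝ → ℝ} {K : ℝ}
    (h : Tendsto (fun t => f t - g t) atTop (nhds K))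
    (hg : Tendsto g atTop atTop) :
    Tendsto (fun t => f t / g t) atTop (nhds 1) := by
  have h1 : Tendsto (fun t => (f t - g t) / g t + 1) atTop (nhds (0 + 1)) :=
    (h.div_atTop hg).add_const 1
  rw [zero_add] at h1
  refine h1.congr' ?_
  filter_upwards [hg.eventually_gt_atTop 0] with t ht
  field_simp
  ring

lemma log_linear_sub_log {Q0 c : ℝ} (hQ0 : 0 < Q0) (hc : 0 < c) :
    Tendsto (fun t => Real.log (Q0 + c * t) - Real.log t) atTop (nhds (Real.log c)) := by
  have h1 : Tendsto (fun t : ℝ => Q0 / t + c) atTop (nhds c) := by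
    simpa using (tendsto_const_nhds.div_atTop tendsto_id).add_const c
  have h2 : Tendsto (fun t : ℝ => Real.log (Q0 / t + c)) atTop (nhds (Real.log c)) :=
    ((Real.continuousAt_log hc.ne').tendsto.comp h1)
  refine h2.congr' ?_
  filter_upwards [eventually_gt_atTop 0] with t ht
  have hpos : 0 < Q0 + c * t := by positivity
  rw [← Real.log_div hpos.ne' ht.ne']
  congr 1
  field_simp


lemma log_affine_log {c d Q0 C : ℝ} (hc : 0 < c) (hC : 0 < C) (hQ0 : 0 < Q0) :
    Tendsto (fun t => Real.log (c * Real.log (Q0 + C * t) + d) / Real.log (Real.log t))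
      atTop (nhds 1) := by
  set L : ℝ → ℝ := fun t => Real.log (Q0 + C * t) with hL
  have hLtop : Tendsto L atTop atTop := by
    apply Real.tendsto_log_atTop.comp
    exact tendsto_atTop_add_const_left _ Q0 (tendsto_id.const_mul_atTop hC)
  -- part 1 : log (c L + d) - log L → log c
  have hdL : Tendsto (fun t => c + d / L t) atTop (nhds c) := by
    simpa using (tendsto_const_nhds.div_atTop hLtop).const_add c
  have part1 : Tendsto (fun t => Real.log (c * L t + d) - Real.log (L t)) atTop
      (nhds (Real.log c)) := by
    refine ((Real.continuousAt_log hc.ne').tendsto.comp hdL).congr' ?_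
    filter_upwards [hLtop.eventually_gt_atTop 0,
      hLtop.eventually_ge_atTop ((1 - d) / c)] with t h1 h2
    have hpos : 0 < c * L t + d := by
      have : 1 - d ≤ c * L t := by
        rw [div_le_iff₀ hc] at h2; linarith [h2]
      linarith
    have harg : c + d / L t = (c * L t + d) / L t := by field_simp
    show Real.log (c + d / L t) = _
    rw [harg, Real.log_div hpos.ne' h1.ne']
  -- part 2 : log L - log log → 0
  have hratio : Tendsto (fun t => L t / Real.log t) atTop (nhds 1) :=
    ratio_one (log_linear_sub_log hQ0 hC) Real.tendsto_log_atTop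
  have part2 : Tendsto (fun t => Real.log (L t) - Real.log (Real.log t)) atTop (nhds 0) := by
    have := (Real.continuousAt_log one_ne_zero).tendsto.comp hratio
    rw [Real.log_one] at this
    refine this.congr' ?_
    filter_upwards [hLtop.eventually_gt_atTop 0,
      Real.tendsto_log_atTop.eventually_gt_atTop 0] with t h1 h2
    rw [Function.comp_apply, Real.log_div h1.ne' h2.ne']
  -- combine
  have hsum : Tendsto (fun t => Real.log (c * L t + d) - Real.log (Real.log t)) atTop
      (nhds (Real.log c)) := by
    have := part1.add part2
    rw [add_zero] at this
    refine this.congr ?_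
    intro t; ring
  exact ratio_one hsum (Real.tendsto_log_atTop.comp Real.tendsto_log_atTop)


/-- **real-time asymptotics at the critical point of the simplified
model.** If `(S, b)` solves the real-time gradient flow `dS/dt = (η/2)e^{b−S}`,
`db/dt = −(η/2)e^{b}(e^{−S} + 1)` of the simplified model at `x₂ = 0`, then as `t → ∞`
one has `b(t)/log t → −1` and `S(t)/log log t → 1`; in particular `S(t) → ∞` while
`S(t)/b(t) → 0`. -/
theorem simplified_model_real_time_asymptotics_critical
    (η S₀ b₀ : ℝ) (hη : 0 < η)
    (S b : ℝ → ℝ) (hS0 : S 0 = S₀) (hb0 : b 0 = b₀)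
    (hS : ∀ t ≥ (0 : ℝ), HasDerivWithinAt S
      (η / 2 * Real.exp (b t - S t)) (Set.Ici 0) t)
    (hb : ∀ t ≥ (0 : ℝ), HasDerivWithinAt b
      (-(η / 2) * Real.exp (b t) * (Real.exp (-(S t)) + 1)) (Set.Ici 0) t) :
    Tendsto (fun t => b t / Real.log t) atTop (nhds (-1)) ∧
    Tendsto (fun t => S t / Real.log (Real.log t)) atTop (nhds 1) ∧
    Tendsto S atTop atTop ∧
    Tendsto (fun t => S t / b t) atTop (nhds 0) := by
  set P : ℝ → ℝ := fun t => Real.exp (S t) with hPdef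
  set Q : ℝ → ℝ := fun t => Real.exp (-(b t)) with hQdef
  have hPpos : ∀ t, 0 < P t := fun t => Real.exp_pos _
  have hQpos : ∀ t, 0 < Q t := fun t => Real.exp_pos _
  have hP' : ∀ t ∈ Set.Ici (0:ℝ),
      HasDerivWithinAt P (η/2 * Real.exp (b t)) (Set.Ici 0) t := by
    intro t ht
    have h := (Real.hasDerivAt_exp (S t)).comp_hasDerivWithinAt t (hS t ht)
    refine h.congr_deriv ?_
    rw [Real.exp_sub]
    field_simp [Real.exp_ne_zero]
  have hQ' : ∀ t ∈ Set.Ici (0:ℝ),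
      HasDerivWithinAt Q (η/2 * (Real.exp (-(S t)) + 1)) (Set.Ici 0) t := by
    intro t ht
    have h := (Real.hasDerivAt_exp (-(b t))).comp_hasDerivWithinAt t (hb t ht).neg
    refine h.congr_deriv ?_
    rw [Real.exp_neg (b t)]
    field_simp [Real.exp_ne_zero]
  have mP : MonotoneOn P (Set.Ici 0) := by
    apply myMono hP'
    intro t ht
    positivity
  have hPlow : ∀ t ∈ Set.Ici (0:ℝ), P 0 ≤ P t := fun t ht =>
    mP Set.self_mem_Ici ht ht
  -- lower bound on Q
  have hQlin : ∀ t ∈ Set.Ici (0:ℝ), Q 0 + η/2 * t ≤ Q t := by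
    have mf : MonotoneOn (fun t => Q t - η/2 * t) (Set.Ici 0) := by
      apply myMono (f' := fun t => η/2 * (Real.exp (-(S t)) + 1) - η/2)
      · intro t ht
        have h2 : HasDerivWithinAt (fun t : ℝ => η/2 * t) (η/2) (Set.Ici 0) t := by
          simpa using ((hasDerivAt_id t).const_mul (η/2)).hasDerivWithinAt
        exact (hQ' t ht).sub h2
      · intro t ht
        have := Real.exp_pos (-(S t))
        nlinarith
    intro t ht
    have := mf Set.self_mem_Ici ht ht
    simp only [mul_zero, sub_zero] at this
    linarith
  -- upper bound on Q
  set C : ℝ := η/2 * (1/(P 0) + 1) with hCdef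
  have hP0pos : 0 < P 0 := hPpos 0
  have hQ0pos : 0 < Q 0 := hQpos 0
  have hCpos : 0 < C := by positivity
  have hQup : ∀ t ∈ Set.Ici (0:ℝ), Q t ≤ Q 0 + C * t := by
    have mf : MonotoneOn (fun t => C * t - Q t) (Set.Ici 0) := by
      apply myMono (f' := fun t => C - η/2 * (Real.exp (-(S t)) + 1))
      · intro t ht
        have h2 : HasDerivWithinAt (fun t : ℝ => C * t) C (Set.Ici 0) t := by
          simpa using ((hasDerivAt_id t).const_mul C).hasDerivWithinAt
        exact h2.sub (hQ' t ht)
      · intro t ht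
        have hPt := hPlow t ht
        have h1 : Real.exp (-(S t)) = 1 / P t := by
          rw [Real.exp_neg]; simp [hPdef]
        have h2 : 1 / P t ≤ 1 / P 0 :=
          one_div_le_one_div_of_le hP0pos hPt
        rw [h1, hCdef]
        nlinarith
    intro t ht
    have := mf Set.self_mem_Ici ht ht
    simp only [mul_zero, zero_sub] at this
    linarith
  -- derivative of P expressed via Q
  have hexpb : ∀ t, Real.exp (b t) = (Q t)⁻¹ := by
    intro t; rw [hQdef]; simp [Real.exp_neg]
  -- upper bound on P
  set G : ℝ → ℝ := fun t => Real.log (Q 0 + η/2 * t) - Real.log (Q 0) + P 0 with hGdef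
  have hGder : ∀ t ∈ Set.Ici (0:ℝ),
      HasDerivWithinAt G ((Q 0 + η/2 * t)⁻¹ * (η/2)) (Set.Ici 0) t := by
    intro t ht
    have hpos : 0 < Q 0 + η/2 * t := by
      have : (0:ℝ) ≤ t := ht
      positivity
    have h1 : HasDerivAt (fun t : ℝ => Q 0 + η/2 * t) (η/2) t := by
      simpa using ((hasDerivAt_id t).const_mul (η/2)).const_add (Q 0)
    have h2 := (Real.hasDerivAt_log hpos.ne').comp t h1
    exact ((h2.sub_const (Real.log (Q 0))).add_const (P 0)).hasDerivWithinAt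
  have hPle : ∀ t ∈ Set.Ici (0:ℝ), P t ≤ G t := by
    have mf : MonotoneOn (fun t => G t - P t) (Set.Ici 0) := by
      apply myMono (f' := fun t => (Q 0 + η/2 * t)⁻¹ * (η/2) - η/2 * Real.exp (b t))
      · intro t ht
        exact (hGder t ht).sub (hP' t ht)
      · intro t ht
        have h1 := hQlin t ht
        have h2 : 0 < Q 0 + η/2 * t := by
          have : (0:ℝ) ≤ t := ht
          positivity
        have h3 : (Q t)⁻¹ ≤ (Q 0 + η/2 * t)⁻¹ :=
          inv_anti₀ h2 h1
        rw [hexpb t]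
        nlinarith [hQpos t]
    intro t ht
    have := mf Set.self_mem_Ici ht ht
    replace this : G 0 - P 0 ≤ G t - P t := this
    have hG0 : G 0 - P 0 = 0 := by simp [hGdef]
    linarith
  -- lower bound on P
  set H : ℝ → ℝ := fun t => η/(2*C) * (Real.log (Q 0 + C * t) - Real.log (Q 0)) + P 0
    with hHdef
  have hHle : ∀ t ∈ Set.Ici (0:ℝ), H t ≤ P t := by
    have mf : MonotoneOn (fun t => P t - H t) (Set.Ici 0) := by
      apply myMono (f' := fun t => η/2 * Real.exp (b t) - η/(2*C) * ((Q 0 + C * t)⁻¹ * C))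
      · intro t ht
        have hpos : 0 < Q 0 + C * t := by
          have : (0:ℝ) ≤ t := ht
          positivity
        have h1 : HasDerivAt (fun t : ℝ => Q 0 + C * t) C t := by
          simpa using ((hasDerivAt_id t).const_mul C).const_add (Q 0)
        have h2 := (Real.hasDerivAt_log hpos.ne').comp t h1
        have h3 : HasDerivAt H (η/(2*C) * ((Q 0 + C * t)⁻¹ * C)) t :=
          (((h2.sub_const (Real.log (Q 0))).const_mul (η/(2*C))).add_const (P 0))
        exact (hP' t ht).sub h3.hasDerivWithinAt
      · intro t ht
        have h1 := hQup t ht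
        have hpos : 0 < Q 0 + C * t := by
          have : (0:ℝ) ≤ t := ht
          positivity
        have h3 : (Q 0 + C * t)⁻¹ ≤ (Q t)⁻¹ :=
          inv_anti₀ (hQpos t) h1
        rw [hexpb t]
        have hc' : η/(2*C) * ((Q 0 + C * t)⁻¹ * C) = η/2 * (Q 0 + C * t)⁻¹ := by
          field_simp
        rw [hc']
        nlinarith
    intro t ht
    have := mf Set.self_mem_Ici ht ht
    replace this : P 0 - H 0 ≤ P t - H t := this
    have hH0 : P 0 - H 0 = 0 := by simp [hHdef]
    linarith
  -- log Q t = - b t ; log P t = S t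
  have hlogQ : ∀ t, Real.log (Q t) = -(b t) := by
    intro t; rw [hQdef]; simp [Real.log_exp]
  have hlogP : ∀ t, Real.log (P t) = S t := by
    intro t; rw [hPdef]; simp [Real.log_exp]
  -- Conclusion 1
  have low1 : Tendsto (fun t => Real.log (Q 0 + η/2 * t) / Real.log t) atTop (nhds 1) :=
    ratio_one (log_linear_sub_log hQ0pos (by positivity)) Real.tendsto_log_atTop
  have up1 : Tendsto (fun t => Real.log (Q 0 + C * t) / Real.log t) atTop (nhds 1) :=
    ratio_one (log_linear_sub_log hQ0pos hCpos) Real.tendsto_log_atTop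
  have mid1 : Tendsto (fun t => Real.log (Q t) / Real.log t) atTop (nhds 1) := by
    refine tendsto_of_tendsto_of_tendsto_of_le_of_le' low1 up1 ?_ ?_
    · filter_upwards [eventually_ge_atTop (0:ℝ), eventually_gt_atTop (1:ℝ)] with t ht0 ht1
      have hlt : 0 < Real.log t := Real.log_pos ht1
      have hpos : 0 < Q 0 + η/2 * t := by positivity
      have := Real.log_le_log hpos (hQlin t ht0)
      exact div_le_div_of_nonneg_right this hlt.le
    · filter_upwards [eventually_ge_atTop (0:ℝ), eventually_gt_atTop (1:ℝ)] with t ht0 ht1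
      have hlt : 0 < Real.log t := Real.log_pos ht1
      have := Real.log_le_log (hQpos t) (hQup t ht0)
      exact div_le_div_of_nonneg_right this hlt.le
  have conc1 : Tendsto (fun t => b t / Real.log t) atTop (nhds (-1)) := by
    have := mid1.neg
    refine this.congr ?_
    intro t
    rw [hlogQ t]
    simp [neg_div]
  -- Conclusion 3
  have hLCtop : Tendsto (fun t => Real.log (Q 0 + C * t)) atTop atTop :=
    Real.tendsto_log_atTop.comp
      (tendsto_atTop_add_const_left _ (Q 0) (tendsto_id.const_mul_atTop hCpos))
  have hHtop : Tendsto H atTop atTop := by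
    have h1 : Tendsto (fun t => Real.log (Q 0 + C * t) - Real.log (Q 0)) atTop atTop :=
      tendsto_atTop_add_const_right _ _ hLCtop
    have h2 : Tendsto (fun t => η/(2*C) * (Real.log (Q 0 + C * t) - Real.log (Q 0)))
        atTop atTop := h1.const_mul_atTop (by positivity)
    exact tendsto_atTop_add_const_right _ _ h2
  have hPtop : Tendsto P atTop atTop := by
    refine tendsto_atTop_mono' atTop ?_ hHtop
    filter_upwards [eventually_ge_atTop (0:ℝ)] with t ht
    exact hHle t ht
  have conc3 : Tendsto S atTop atTop := by
    have := Real.tendsto_log_atTop.comp hPtop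
    refine this.congr ?_
    intro t
    exact hlogP t
  -- Conclusion 2
  have hloglogtop : Tendsto (fun t => Real.log (Real.log t)) atTop atTop :=
    Real.tendsto_log_atTop.comp Real.tendsto_log_atTop
  have llow : Tendsto (fun t => Real.log (H t) / Real.log (Real.log t)) atTop (nhds 1) := by
    have := log_affine_log (c := η/(2*C))
      (d := P 0 - η/(2*C) * Real.log (Q 0)) (by positivity) hCpos hQ0pos
    refine this.congr ?_
    intro t
    congr 2
    rw [hHdef]
    ring
  have lup : Tendsto (fun t => Real.log (G t) / Real.log (Real.log t)) atTop (nhds 1) := by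
    have := log_affine_log (c := (1:ℝ))
      (d := P 0 - Real.log (Q 0)) one_pos (by positivity : (0:ℝ) < η/2) hQ0pos
    refine this.congr ?_
    intro t
    congr 2
    rw [hGdef]
    ring
  have mid2 : Tendsto (fun t => Real.log (P t) / Real.log (Real.log t)) atTop (nhds 1) := by
    refine tendsto_of_tendsto_of_tendsto_of_le_of_le' llow lup ?_ ?_
    · filter_upwards [eventually_ge_atTop (0:ℝ), hHtop.eventually_ge_atTop 1,
        hloglogtop.eventually_gt_atTop 0] with t ht0 ht1 ht2
      have := Real.log_le_log (by linarith : (0:ℝ) < H t) (hHle t ht0)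
      exact div_le_div_of_nonneg_right this ht2.le
    · filter_upwards [eventually_ge_atTop (0:ℝ),
        hloglogtop.eventually_gt_atTop 0] with t ht0 ht2
      have := Real.log_le_log (hPpos t) (hPle t ht0)
      exact div_le_div_of_nonneg_right this ht2.le
  have conc2 : Tendsto (fun t => S t / Real.log (Real.log t)) atTop (nhds 1) := by
    refine mid2.congr ?_
    intro t
    rw [hlogP t]
  -- Conclusion 4
  have h4a : Tendsto (fun t => Real.log (Real.log t) / Real.log t) atTop (nhds 0) :=
    (Real.isLittleO_log_id_atTop.comp_tendsto Real.tendsto_log_atTop).tendsto_div_nhds_zero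
  have h4b : Tendsto (fun t => Real.log t / b t) atTop (nhds (-1)) := by
    have h := conc1.inv₀ (by norm_num : (-1:ℝ) ≠ 0)
    rw [show ((-1:ℝ)⁻¹) = -1 by norm_num] at h
    simpa only [inv_div] using h
  have conc4 : Tendsto (fun t => S t / b t) atTop (nhds 0) := by
    have prod := (conc2.mul h4a).mul h4b
    rw [show ((1:ℝ) * 0 * (-1) : ℝ) = 0 by ring] at prod
    refine prod.congr' ?_
    filter_upwards [hloglogtop.eventually_gt_atTop 0, eventually_gt_atTop (1:ℝ),
      conc1.eventually_lt_const (by norm_num : (-1:ℝ) < -1/2)] with t h1 h2 h3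
    have hlt : 0 < Real.log t := Real.log_pos h2
    have hbne : b t ≠ 0 := by
      intro h
      rw [h] at h3
      simp at h3
      linarith
    field_simp
  exact ⟨conc1, conc2, conc3, conc4⟩
end
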